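/- arXiv:1409.1570 — 10 statements merged into one kernel-verified Lean document; each statement's English description precedes it below -/
import Mathlib

section
/- Antidistinguishability implies zero overlap in any ontological model reproducing the quantum preclusions. Concretely: let n ≥ 1, let μ_j (j ∈ Fin n) be probability measures on a measurable space (Λ, Σ), and let f_j : Λ → ℝ (j ∈ Fin n) be measurable functions with f_j(λ) ≥ 0 and Σ_{j} f_j(λ) = 1 for every λ ∈ Λ, such that ∫ f_j dμ_j = 0 for every j. Then the overlap L({μ_j}) = 0; indeed there is a measurable partition (Ω_j)_{j ∈ Fin n} of Λ with μ_j(Ω_j) = 0 for every j. -/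
open MeasureTheory

/-- The overlap of a finite family of probability measures: the infimum, over all measurable
partitions `(Ω i)` of the space, of `∑ i, μ i (Ω i)`. -/
noncomputable def familyOverlap {Λ : Type*} [MeasurableSpace Λ] {ι : Type*} [Fintype ι]
    (μ : ι → Measure Λ) : ℝ :=
  ⨅ P : {P : ι → Set Λ // (∀ i, MeasurableSet (P i)) ∧
      Pairwise (Function.onFun Disjoint P) ∧ (⋃ i, P i) = Set.univ},
    ∑ i, (μ i (P.1 i)).toReal

/-- Antidistinguishability implies zero overlap in any ontological model reproducing the
quantum preclusions: if the response functions `f j` are nonnegative, sum to `1` pointwise,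
and `∫ f j dμ j = 0` for every `j`, then the overlap of the family `(μ j)` is zero; indeed
there is a measurable partition `(Ω j)` of `Λ` with `μ j (Ω j) = 0` for every `j`. -/
theorem stmt2 {Λ : Type*} [MeasurableSpace Λ] (n : ℕ) (hn : 1 ≤ n)
    (μ : Fin n → Measure Λ) [∀ j, IsProbabilityMeasure (μ j)]
    (f : Fin n → Λ → ℝ) (hmeas : ∀ j, Measurable (f j))
    (hnonneg : ∀ j l, 0 ≤ f j l) (hsum : ∀ l, ∑ j, f j l = 1)
    (hint : ∀ j, ∫ l, f j l ∂(μ j) = 0) :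
    familyOverlap μ = 0 ∧
      ∃ Ω : Fin n → Set Λ, (∀ j, MeasurableSet (Ω j)) ∧
        Pairwise (Function.onFun Disjoint Ω) ∧ (⋃ j, Ω j) = Set.univ ∧
        ∀ j, μ j (Ω j) = 0 := by
  have hnpos : (0:ℝ) < 1 / n := by positivity
  -- the partition
  set Ω : Fin n → Set Λ :=
    fun j => {l | (1:ℝ)/n ≤ f j l ∧ ∀ i, i < j → f i l < 1/n} with hΩ
  have hΩmeas : ∀ j, MeasurableSet (Ω j) := by
    intro j
    have : Ω j = {l | (1:ℝ)/n ≤ f j l} ∩ ⋂ i : Fin n, ⋂ _ : i < j, {l | f i l < 1/n} := by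
      ext l; simp [hΩ, Set.mem_iInter]
    rw [this]
    exact (measurableSet_le measurable_const (hmeas j)).inter
      (MeasurableSet.iInter fun i => MeasurableSet.iInter fun _ =>
        measurableSet_lt (hmeas i) measurable_const)
  have hΩdisj : Pairwise (Function.onFun Disjoint Ω) := by
    have key : ∀ i j : Fin n, i < j → Disjoint (Ω i) (Ω j) := by
      intro i j hij
      rw [Set.disjoint_left]
      rintro l ⟨hi, -⟩ ⟨-, hj⟩
      exact absurd hi (not_le.mpr (hj i hij))
    intro i j hij
    rcases lt_or_gt_of_ne hij with h | h
    · exact key i j h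
    · exact (key j i h).symm
  have hΩcover : (⋃ j, Ω j) = Set.univ := by
    ext l
    simp only [Set.mem_iUnion, Set.mem_univ, iff_true]
    have hne : (Finset.univ.filter (fun j : Fin n => (1:ℝ)/n ≤ f j l)).Nonempty := by
      by_contra h
      rw [Finset.not_nonempty_iff_eq_empty, Finset.filter_eq_empty_iff] at h
      have : ∑ j : Fin n, f j l < ∑ _j : Fin n, (1:ℝ)/n := by
        apply Finset.sum_lt_sum_of_nonempty
        · exact Finset.univ_nonempty_iff.mpr (Fin.pos_iff_nonempty.mp hn)
        · intro j _; exact not_le.mp (h (Finset.mem_univ j))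
      rw [hsum l, Finset.sum_const, Finset.card_univ, Fintype.card_fin] at this
      have hn' : (n:ℝ) ≠ 0 := Nat.cast_ne_zero.mpr (Nat.one_le_iff_ne_zero.mp hn)
      rw [nsmul_eq_mul, mul_one_div, div_self hn'] at this
      exact lt_irrefl _ this
    set s := Finset.univ.filter (fun j : Fin n => (1:ℝ)/n ≤ f j l)
    refine ⟨s.min' hne, ?_, ?_⟩
    · have := s.min'_mem hne
      simp only [s, Finset.mem_filter] at this
      exact this.2
    · intro i hi
      by_contra h
      have : i ∈ s := Finset.mem_filter.mpr ⟨Finset.mem_univ i, not_lt.mp h⟩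
      exact absurd (s.min'_le i this) (not_le.mpr hi)
  have hΩnull : ∀ j, μ j (Ω j) = 0 := by
    intro j
    have hfi : Integrable (f j) (μ j) := by
      apply Integrable.mono' (integrable_const (1:ℝ)) (hmeas j).aestronglyMeasurable
      filter_upwards with l
      rw [Real.norm_of_nonneg (hnonneg j l)]
      calc f j l ≤ ∑ i, f i l :=
            Finset.single_le_sum (fun i _ => hnonneg i l) (Finset.mem_univ j)
        _ = 1 := hsum l
    have hae : f j =ᵐ[μ j] 0 :=
      (integral_eq_zero_iff_of_nonneg (fun l => hnonneg j l) hfi).mp (hint j)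
    have hsub : Ω j ⊆ {l | f j l ≠ 0} := by
      rintro l ⟨h1, -⟩
      exact ne_of_gt (lt_of_lt_of_le hnpos h1)
    exact measure_mono_null hsub hae
  refine ⟨?_, Ω, hΩmeas, hΩdisj, hΩcover, hΩnull⟩
  -- overlap is zero
  have hbdd : BddBelow (Set.range fun P : {P : Fin n → Set Λ // (∀ i, MeasurableSet (P i)) ∧
      Pairwise (Function.onFun Disjoint P) ∧ (⋃ i, P i) = Set.univ} =>
      ∑ i, (μ i (P.1 i)).toReal) := by
    refine ⟨0, ?_⟩
    rintro x ⟨P, rfl⟩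
    exact Finset.sum_nonneg fun i _ => ENNReal.toReal_nonneg
  haveI : Nonempty {P : Fin n → Set Λ // (∀ i, MeasurableSet (P i)) ∧
      Pairwise (Function.onFun Disjoint P) ∧ (⋃ i, P i) = Set.univ} :=
    ⟨⟨Ω, hΩmeas, hΩdisj, hΩcover⟩⟩
  apply le_antisymm
  · have := ciInf_le hbdd (⟨Ω, hΩmeas, hΩdisj, hΩcover⟩ :
      {P : Fin n → Set Λ // (∀ i, MeasurableSet (P i)) ∧
        Pairwise (Function.onFun Disjoint P) ∧ (⋃ i, P i) = Set.univ})
    simpa [familyOverlap, hΩnull] using this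
  · exact le_ciInf fun P => Finset.sum_nonneg fun i _ => ENNReal.toReal_nonneg
end

section
/- If the product measures built from two preparations have zero overlap on the n-fold product space, then the two preparations already have zero overlap. Concretely: let μ₀ and μ₁ be probability measures on a measurable space (Λ, Σ) and let n ≥ 1. For each j : Fin n → Fin 2 let π_j := Measure.pi (fun k => μ_{j k}) be the product probability measure on the product measurable space (Fin n → Λ). If the overlap L({π_j : j ∈ Fin n → Fin 2}) of this family of 2^n product measures is zero, then L(μ₀, μ₁) = 0. -/
/-!
If `s` is a Hahn set for `μ 0 - μ 1`, then `κ := μ 1|_s + μ 0|_sᶜ` lies below both `μ 0` and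
`μ 1` and has mass `μ 0 sᶜ + μ 1 s`. Every product measure `π_j` dominates `κ ⊗ ⋯ ⊗ κ`, so for
any partition `(Ω_j)` of `Λⁿ` we get `∑ j, π_j (Ω_j) ≥ κ(Λ)ⁿ`; zero overlap forces `κ(Λ) = 0`,
and the set `sᶜ` then witnesses `L(μ 0, μ 1) = 0`.
-/

open MeasureTheory

/-- The overlap of a pair of probability measures: `inf_Ω (μ(Ω) + ν(Ωᶜ))` over measurable
sets `Ω`. -/
noncomputable def pairOverlap {Λ : Type*} [MeasurableSpace Λ] (μ ν : Measure Λ) : ℝ :=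
  ⨅ Ω : {s : Set Λ // MeasurableSet s}, ((μ Ω.1).toReal + (ν Ω.1ᶜ).toReal)

open Set

namespace MeasureTheory.Measure

theorem pi_mono {ι : Type*} [Fintype ι] {α : ι → Type*} [∀ i, MeasurableSpace (α i)]
    {μ ν : ∀ i, Measure (α i)} [∀ i, SigmaFinite (μ i)] [∀ i, SigmaFinite (ν i)]
    (h : ∀ i, μ i ≤ ν i) : Measure.pi μ ≤ Measure.pi ν := by
  have hbox :
      (Measure.pi μ).toOuterMeasure ≤ OuterMeasure.pi fun i => (ν i).toOuterMeasure := by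
    refine OuterMeasure.le_pi.2 fun s _ => ?_
    calc Measure.pi μ (univ.pi s) = ∏ i, μ i (s i) := pi_pi μ s
      _ ≤ ∏ i, ν i (s i) := Finset.prod_le_prod' fun i _ => le_iff'.1 (h i) (s i)
  refine le_iff.2 fun A hA => (hbox A).trans_eq ?_
  rw [pi_def]
  exact (toMeasure_apply _ _ hA).symm

theorem exists_le_le_measure_univ_eq {α : Type*} [MeasurableSpace α] (μ ν : Measure α)
    [IsFiniteMeasure μ] [IsFiniteMeasure ν] :
    ∃ κ : Measure α, κ ≤ μ ∧ κ ≤ ν ∧ ∃ t, MeasurableSet t ∧ κ univ = μ t + ν tᶜ := by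
  obtain ⟨s, hs, hνμ, hμν⟩ := hahn_decomposition μ ν
  have hκ : ∀ u, MeasurableSet u →
      (ν.restrict s + μ.restrict sᶜ) u = ν (u ∩ s) + μ (u ∩ sᶜ) := fun u hu => by
    simp [restrict_apply hu]
  refine ⟨ν.restrict s + μ.restrict sᶜ, le_iff.2 fun u hu => ?_, le_iff.2 fun u hu => ?_,
    sᶜ, hs.compl, by rw [hκ _ .univ, compl_compl, univ_inter, univ_inter, add_comm]⟩
  · calc _ = ν (u ∩ s) + μ (u ∩ sᶜ) := hκ u hu
      _ ≤ μ (u ∩ s) + μ (u ∩ sᶜ) :=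
        add_le_add_left (hνμ _ (hu.inter hs) inter_subset_right) _
      _ = μ u := measure_inter_add_sdiff u hs
  · calc _ = ν (u ∩ s) + μ (u ∩ sᶜ) := hκ u hu
      _ ≤ ν (u ∩ s) + ν (u ∩ sᶜ) :=
        add_le_add_right (hμν _ (hu.inter hs.compl) inter_subset_right) _
      _ = ν u := measure_inter_add_sdiff u hs

end MeasureTheory.Measure

theorem measure_univ_toReal_le_familyOverlap {Λ ι : Type*} [MeasurableSpace Λ] [Fintype ι]
    [Nonempty ι] {μ : ι → Measure Λ} [∀ i, IsFiniteMeasure (μ i)] {κ : Measure Λ}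
    [IsFiniteMeasure κ] (h : ∀ i, κ ≤ μ i) : (κ univ).toReal ≤ familyOverlap μ := by
  obtain ⟨i₀⟩ := ‹Nonempty ι›
  have : Nonempty {P : ι → Set Λ // (∀ i, MeasurableSet (P i)) ∧
      Pairwise (Function.onFun Disjoint P) ∧ (⋃ i, P i) = univ} := by
    refine ⟨⟨fun i => {_x | i = i₀}, fun _ => .const _, fun i j hij => ?_,
      eq_univ_of_forall fun _ => mem_iUnion.2 ⟨i₀, rfl⟩⟩⟩
    exact disjoint_left.2 fun _ hi hj => hij (hi.trans hj.symm)
  refine le_ciInf fun ⟨P, hPm, hPd, hPu⟩ => ?_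
  calc (κ univ).toReal = ∑ i, (κ (P i)).toReal := by
        rw [← hPu, measure_iUnion hPd hPm, tsum_fintype,
          ENNReal.toReal_sum fun i _ => measure_ne_top _ _]
    _ ≤ ∑ i, (μ i (P i)).toReal := Finset.sum_le_sum fun i _ =>
        ENNReal.toReal_mono (measure_ne_top _ _) (Measure.le_iff'.1 (h i) _)

theorem pairOverlap_nonneg {Λ : Type*} [MeasurableSpace Λ] (μ ν : Measure Λ) :
    0 ≤ pairOverlap μ ν :=
  Real.iInf_nonneg fun _ => by positivity

theorem pairOverlap_le {Λ : Type*} [MeasurableSpace Λ] (μ ν : Measure Λ) {s : Set Λ}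
    (hs : MeasurableSet s) : pairOverlap μ ν ≤ (μ s).toReal + (ν sᶜ).toReal :=
  ciInf_le ⟨0, by rintro _ ⟨_, rfl⟩; positivity⟩ (⟨s, hs⟩ : {s : Set Λ // MeasurableSet s})

theorem stmt3_general {Λ : Type*} [MeasurableSpace Λ]
    (μ : Fin 2 → Measure Λ) [∀ i, IsProbabilityMeasure (μ i)]
    (n : ℕ)
    (h : familyOverlap (fun j : Fin n → Fin 2 => Measure.pi (fun k => μ (j k))) = 0) :
    pairOverlap (μ 0) (μ 1) = 0 := by
  obtain ⟨κ, hκ0, hκ1, s, hs, hκ⟩ := (μ 0).exists_le_le_measure_univ_eq (μ 1)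
  have : IsFiniteMeasure κ := isFiniteMeasure_of_le (μ 0) hκ0
  have hpow : (κ univ).toReal ^ n ≤ 0 := by
    have hκμ : ∀ i, κ ≤ μ i := Fin.forall_fin_two.2 ⟨hκ0, hκ1⟩
    have hle : ∀ j : Fin n → Fin 2, Measure.pi (fun _ => κ) ≤ Measure.pi fun k => μ (j k) :=
      fun j => Measure.pi_mono fun k => hκμ (j k)
    have := measure_univ_toReal_le_familyOverlap hle
    rwa [h, Measure.pi_univ, Finset.prod_const, Finset.card_univ, Fintype.card_fin,
      ENNReal.toReal_pow] at this
  have hκ_null : (κ univ).toReal = 0 :=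
    eq_zero_of_pow_eq_zero (le_antisymm hpow (by positivity))
  refine le_antisymm ?_ (pairOverlap_nonneg _ _)
  calc pairOverlap (μ 0) (μ 1) ≤ (μ 0 s).toReal + (μ 1 sᶜ).toReal := pairOverlap_le _ _ hs
    _ = 0 := by
      rw [← ENNReal.toReal_add (measure_ne_top _ _) (measure_ne_top _ _), ← hκ, hκ_null]

/-- If the `2^n` product measures built from two preparations `μ 0`, `μ 1` have zero overlap
on the `n`-fold product space, then the two preparations already have zero overlap. -/
theorem stmt3 {Λ : Type*} [MeasurableSpace Λ]
    (μ : Fin 2 → Measure Λ) [∀ i, IsProbabilityMeasure (μ i)]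
    (n : ℕ) (hn : 1 ≤ n)
    (h : familyOverlap (fun j : Fin n → Fin 2 => Measure.pi (fun k => μ (j k))) = 0) :
    pairOverlap (μ 0) (μ 1) = 0 :=
  stmt3_general μ n h
end

section
/- Let d ≥ 2 and let ψ₀, ψ₁ ∈ EuclideanSpace ℂ (Fin d) be unit vectors with ‖⟪ψ₀, ψ₁⟫‖² ≤ 1/2, and let ρ_i ∈ Matrix (Fin d) (Fin d) ℂ be the rank-one density matrices ρ_i(a, b) = ψ_i(a) · conj(ψ_i(b)). Then there exist matrices E_{jk} ∈ Matrix (Fin d × Fin d) (Fin d × Fin d) ℂ for j, k ∈ Fin 2 such that each E_{jk} is positive semidefinite, Σ_{j,k} E_{jk} = 1 (the identity matrix), and trace(E_{jk} * (ρ_j ⊗ ρ_k)) = 0 for all j, k ∈ Fin 2, where ρ_j ⊗ ρ_k denotes the Kronecker product. In other words, the four product states ρ_j ⊗ ρ_k (j, k ∈ {0,1}) are antidistinguishable. -/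
open MeasureTheory Matrix
open scoped ComplexOrder

/-- The rank-one density matrix `|ψ⟩⟨ψ|` of a vector `ψ`. -/
noncomputable def rankOne {d : ℕ} (ψ : EuclideanSpace ℂ (Fin d)) :
    Matrix (Fin d) (Fin d) ℂ :=
  Matrix.of fun a b => ψ a * (starRingEnd ℂ) (ψ b)

/-!
Rotating the phase of `ψ₁` makes `c = ⟪ψ₀, ψ₁⟫` real. The two vectors then span a qubit in which
`ψ_j = g₀ e₀ ± g₁ e₁` with `g₀² = (1 + c) / 2`, `g₁² = (1 - c) / 2`, and an isometry carries the
problem into `ℂ² ⊗ ℂ²` (the complement of its range can go to any one outcome). There, for unimodular `u_ab`, the four vectors `(±1)(±1) conj u_ab / 2`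
form an orthonormal basis, and the one with signs `(j, k)` is orthogonal to `ψ_j ⊗ ψ_k` as soon as
`∑ g_a g_b u_ab = 0`, i.e. as soon as `g₀²`, `2 g₀ g₁`, `g₁²` are the sides of a triangle. The only
nontrivial triangle inequality is `|c| ≤ √(1 - c²)`, which is `c² ≤ 1/2`.
-/

open scoped Kronecker

section Antidistinguishable

variable {ι n m R : Type*} [Fintype ι] [Fintype n] [Fintype m] [DecidableEq n] [DecidableEq m]
  [CommRing R] [PartialOrder R] [StarRing R] [StarOrderedRing R]

def Antidistinguishable (ρ : ι → Matrix n n R) : Prop :=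
  ∃ E : ι → Matrix n n R, (∀ i, (E i).PosSemidef) ∧ ∑ i, E i = 1 ∧ ∀ i, (E i * ρ i).trace = 0

theorem antidistinguishable_vecMulVec {v φ : ι → n → R}
    (hv : ∑ i, vecMulVec (v i) (star (v i)) = 1) (horth : ∀ i, star (v i) ⬝ᵥ φ i = 0) :
    Antidistinguishable fun i => vecMulVec (φ i) (star (φ i)) :=
  ⟨fun i => vecMulVec (v i) (star (v i)), fun i => posSemidef_vecMulVec_self_star _, hv,
    fun i => by simp [vecMulVec_mul_vecMulVec, horth]⟩

theorem Antidistinguishable.conj_isometry [Nonempty ι] {σ : ι → Matrix m m R}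
    (hσ : Antidistinguishable σ) {V : Matrix n m R} (hV : Vᴴ * V = 1) :
    Antidistinguishable fun i => V * σ i * Vᴴ := by
  classical
  obtain ⟨F, hF, hsum, htr⟩ := hσ
  obtain ⟨i₀⟩ := ‹Nonempty ι›
  set P : Matrix n n R := 1 - V * Vᴴ
  have hPV : P * V = 0 := by
    rw [Matrix.sub_mul, Matrix.one_mul, Matrix.mul_assoc, hV, Matrix.mul_one, sub_self]
  have hP : P.PosSemidef := by
    have hPP : Pᴴ * P = P := by
      rw [show Pᴴ = P by simp [P], Matrix.mul_sub, Matrix.mul_one, ← Matrix.mul_assoc, hPV,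
        Matrix.zero_mul, sub_zero]
    simpa [hPP] using posSemidef_conjTranspose_mul_self P
  refine ⟨fun i => V * F i * Vᴴ + if i = i₀ then P else 0, fun i => ?_, ?_, fun i => ?_⟩
  · refine ((hF i).mul_mul_conjTranspose_same V).add ?_
    split_ifs
    exacts [hP, PosSemidef.zero]
  · rw [Finset.sum_add_distrib, Finset.sum_ite_eq', if_pos (Finset.mem_univ _), ← Matrix.sum_mul,
      ← Matrix.mul_sum, hsum]
    simp [P]
  · have hVV : V * F i * Vᴴ * (V * σ i * Vᴴ) = V * (F i * σ i) * Vᴴ := by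
      simp only [Matrix.mul_assoc, ← Matrix.mul_assoc Vᴴ, hV, Matrix.one_mul]
    rw [Matrix.add_mul, trace_add, hVV, trace_mul_cycle, hV, Matrix.one_mul, htr]
    split_ifs
    · simp [← Matrix.mul_assoc, hPV]
    · simp

end Antidistinguishable

theorem exists_isometry_mul_eq {k n K : Type*} [Fintype k] [DecidableEq k] [Fintype n]
    [Field K] [StarRing K] {Φ : Matrix k k K} {Ψ : Matrix n k K} (hΦ : IsUnit Φ.det)
    (h : Ψᴴ * Ψ = Φᴴ * Φ) : ∃ V : Matrix n k K, Vᴴ * V = 1 ∧ V * Φ = Ψ := by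
  have hΦH : IsUnit Φᴴ.det := by simpa [det_conjTranspose] using hΦ.star
  refine ⟨Ψ * Φ⁻¹, ?_, by rw [Matrix.mul_assoc, nonsing_inv_mul _ hΦ, Matrix.mul_one]⟩
  rw [conjTranspose_mul, conjTranspose_nonsing_inv, Matrix.mul_assoc, ← Matrix.mul_assoc Ψᴴ, h,
    ← Matrix.mul_assoc, ← Matrix.mul_assoc, nonsing_inv_mul _ hΦH, Matrix.one_mul,
    mul_nonsing_inv _ hΦ]

section PureProductStates

variable {k n R : Type*} [CommRing R] [StarRing R]

def pureProductStates (Ψ : Matrix n k R) (i : k × k) : Matrix (n × n) (n × n) R :=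
  vecMulVec (Ψᵀ i.1) (star (Ψᵀ i.1)) ⊗ₖ vecMulVec (Ψᵀ i.2) (star (Ψᵀ i.2))

theorem pureProductStates_eq_vecMulVec (Ψ : Matrix n k R) (i : k × k) :
    pureProductStates Ψ i =
      vecMulVec (fun x => Ψ x.1 i.1 * Ψ x.2 i.2) (star fun x => Ψ x.1 i.1 * Ψ x.2 i.2) := by
  ext x y
  simp only [pureProductStates, kroneckerMap_apply, vecMulVec_apply, Pi.star_apply, star_mul',
    transpose_apply]
  ring

theorem vecMulVec_mulVec_star {m : Type*} [Fintype n] (V : Matrix m n R) (x : n → R) :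
    vecMulVec (V *ᵥ x) (star (V *ᵥ x)) = V * vecMulVec x (star x) * Vᴴ := by
  rw [mul_vecMulVec, vecMulVec_mul, star_mulVec]

theorem pureProductStates_mul {m : Type*} [Fintype n] (V : Matrix m n R) (Φ : Matrix n k R)
    (i : k × k) :
    pureProductStates (V * Φ) i = (V ⊗ₖ V) * pureProductStates Φ i * (V ⊗ₖ V)ᴴ := by
  have hcol : ∀ j, (V * Φ)ᵀ j = V *ᵥ Φᵀ j := fun j => by
    ext x
    simp [mul_apply, mulVec, dotProduct]
  rw [pureProductStates, pureProductStates, hcol, hcol, vecMulVec_mulVec_star,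
    vecMulVec_mulVec_star, mul_kronecker_mul, mul_kronecker_mul, conjTranspose_kronecker]

end PureProductStates

theorem conjTranspose_kronecker_mul_self {l m n p R : Type*} [Fintype l] [Fintype n]
    [DecidableEq m] [DecidableEq p] [CommRing R] [StarRing R]
    {V : Matrix l m R} {W : Matrix n p R} (hV : Vᴴ * V = 1) (hW : Wᴴ * W = 1) :
    (V ⊗ₖ W)ᴴ * (V ⊗ₖ W) = 1 := by
  rw [conjTranspose_kronecker, ← mul_kronecker_mul, hV, hW, one_kronecker_one]

theorem Complex.exists_norm_eq_one_add_mul_add_mul_eq_zero {a b t : ℝ} (ha : 0 < a) (hb : 0 < b)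
    (ht : 0 < t) (hab : |a - b| ≤ t) (ht' : t ≤ a + b) :
    ∃ y z : ℂ, ‖y‖ = 1 ∧ ‖z‖ = 1 ∧ a + b * y + t * z = 0 := by
  set X := (t ^ 2 - a ^ 2 - b ^ 2) / (2 * a * b)
  have hX : X ^ 2 ≤ 1 := by
    have h₁ : (a - b) ^ 2 ≤ t ^ 2 := sq_le_sq' (abs_le.1 hab).1 (abs_le.1 hab).2
    have h₂ : t ^ 2 ≤ (a + b) ^ 2 := by gcongr
    rw [div_pow, div_le_one (by positivity)]
    nlinarith [mul_nonpos_of_nonneg_of_nonpos (sub_nonneg.2 h₁) (sub_nonpos.2 h₂)]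
  set y : ℂ := ⟨X, √(1 - X ^ 2)⟩
  have hy : Complex.normSq y = 1 := by
    simp [y, Complex.normSq_apply, ← sq, Real.sq_sqrt (sub_nonneg.2 hX)]
  have hay : Complex.normSq (a + b * y) = t ^ 2 := by
    have : X * (2 * a * b) = t ^ 2 - a ^ 2 - b ^ 2 := div_mul_cancel₀ _ (by positivity)
    simp only [Complex.normSq_apply, Complex.add_re, Complex.add_im, Complex.mul_re,
      Complex.mul_im, Complex.ofReal_re, Complex.ofReal_im, y]
    nlinarith [Real.sq_sqrt (sub_nonneg.2 hX)]
  refine ⟨y, -(a + b * y) / t, ?_, ?_, ?_⟩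
  · rw [← pow_eq_one_iff_of_nonneg (norm_nonneg _) two_ne_zero, Complex.sq_norm, hy]
  · rw [← pow_eq_one_iff_of_nonneg (norm_nonneg _) two_ne_zero, Complex.sq_norm,
      Complex.normSq_div, Complex.normSq_neg, hay, Complex.normSq_ofReal, ← sq,
      div_self (by positivity)]
  · rw [mul_div_cancel₀ _ (Complex.ofReal_ne_zero.2 ht.ne'), add_neg_cancel]

def hadamardMatrix : Matrix (Fin 2) (Fin 2) ℂ := !![1, 1; 1, -1]

theorem star_hadamardMatrix_apply (a j : Fin 2) :
    star (hadamardMatrix a j) = hadamardMatrix a j := by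
  fin_cases a <;> fin_cases j <;> simp [hadamardMatrix]

theorem hadamardMatrix_mul_self_apply (a j : Fin 2) :
    hadamardMatrix a j * hadamardMatrix a j = 1 := by
  fin_cases a <;> fin_cases j <;> simp [hadamardMatrix]

theorem sum_hadamardMatrix_mul_hadamardMatrix (a a' : Fin 2) :
    ∑ j, hadamardMatrix a j * hadamardMatrix a' j = if a = a' then 2 else 0 := by
  fin_cases a <;> fin_cases a' <;> norm_num [hadamardMatrix, Fin.sum_univ_two]

theorem antidistinguishable_pureProductStates_diagonal_mul_hadamardMatrix (g : Fin 2 → ℂ)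
    {u : Fin 2 × Fin 2 → ℂ} (hu : ∀ κ, ‖u κ‖ = 1) (hgu : ∑ κ, g κ.1 * g κ.2 * u κ = 0) :
    Antidistinguishable (pureProductStates (diagonal g * hadamardMatrix)) := by
  let v : Fin 2 × Fin 2 → Fin 2 × Fin 2 → ℂ := fun i κ =>
    hadamardMatrix κ.1 i.1 * hadamardMatrix κ.2 i.2 * star (u κ) / 2
  have hsum : ∑ i, vecMulVec (v i) (star (v i)) = 1 := by
    ext ⟨a, b⟩ ⟨a', b'⟩
    calc (∑ i, vecMulVec (v i) (star (v i))) (a, b) (a', b')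
        = (∑ j, hadamardMatrix a j * hadamardMatrix a' j) *
            (∑ k, hadamardMatrix b k * hadamardMatrix b' k) *
              (star (u (a, b)) * u (a', b')) / 4 := by
          rw [Finset.sum_mul_sum]
          simp only [Matrix.sum_apply, vecMulVec_apply, Fintype.sum_prod_type,
            Finset.sum_mul, Finset.sum_div, Pi.star_apply, v, star_div₀, star_mul', star_star,
            star_hadamardMatrix_apply, star_ofNat]
          refine Finset.sum_congr rfl fun j _ => Finset.sum_congr rfl fun k _ => ?_
          ring
      _ = (1 : Matrix (Fin 2 × Fin 2) (Fin 2 × Fin 2) ℂ) (a, b) (a', b') := by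
          rw [sum_hadamardMatrix_mul_hadamardMatrix, sum_hadamardMatrix_mul_hadamardMatrix,
            one_apply]
          rcases eq_or_ne a a' with rfl | ha
          · rcases eq_or_ne b b' with rfl | hb
            · rw [RCLike.star_def, Complex.conj_mul', hu]
              norm_num
            · simp [hb]
          · simp [ha]
  have horth : ∀ i, star (v i) ⬝ᵥ (fun κ => (diagonal g * hadamardMatrix) κ.1 i.1 *
      (diagonal g * hadamardMatrix) κ.2 i.2) = 0 := fun i => by
    calc star (v i) ⬝ᵥ _ = (∑ κ, g κ.1 * g κ.2 * u κ) / 2 := by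
          rw [dotProduct, Finset.sum_div]
          refine Finset.sum_congr rfl fun κ _ => ?_
          simp only [Pi.star_apply, v, star_div₀, star_mul', star_star, star_hadamardMatrix_apply,
            star_ofNat, diagonal_mul]
          linear_combination (g κ.1 * g κ.2 * u κ / 2) *
            (hadamardMatrix κ.2 i.2 * hadamardMatrix κ.2 i.2 *
              hadamardMatrix_mul_self_apply κ.1 i.1 + hadamardMatrix_mul_self_apply κ.2 i.2)
      _ = 0 := by rw [hgu, zero_div]
  rw [funext (pureProductStates_eq_vecMulVec _)]
  exact antidistinguishable_vecMulVec hsum horth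

theorem antidistinguishable_pureProductStates {n : Type*} [Fintype n] [DecidableEq n]
    {Ψ : Matrix n (Fin 2) ℂ} {c : ℝ} (hΨ : Ψᴴ * Ψ = !![1, (c : ℂ); c, 1]) (hc : c ^ 2 ≤ 1 / 2) :
    Antidistinguishable (pureProductStates Ψ) := by
  set g₀ := √((1 + c) / 2)
  set g₁ := √((1 - c) / 2)
  have hc₁ : |c| < 1 := abs_lt_of_sq_lt_sq (by linarith) zero_le_one
  have hg₀ : g₀ ^ 2 = (1 + c) / 2 := Real.sq_sqrt (by linarith [neg_abs_le c])
  have hg₁ : g₁ ^ 2 = (1 - c) / 2 := Real.sq_sqrt (by linarith [le_abs_self c])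
  have hg₀_pos : 0 < g₀ := Real.sqrt_pos.2 (by linarith [neg_abs_le c])
  have hg₁_pos : 0 < g₁ := Real.sqrt_pos.2 (by linarith [le_abs_self c])
  obtain ⟨y, z, hy, hz, hyz⟩ := Complex.exists_norm_eq_one_add_mul_add_mul_eq_zero
    (pow_pos hg₀_pos 2) (pow_pos hg₁_pos 2) (by positivity : 0 < 2 * g₀ * g₁)
    (abs_le_of_sq_le_sq (by nlinarith) (by positivity)) (by nlinarith [sq_nonneg (g₀ - g₁)])
  let g : Fin 2 → ℂ := ![g₀, g₁]
  have hΦ : IsUnit (diagonal g * hadamardMatrix).det := by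
    rw [isUnit_iff_ne_zero, det_mul, det_diagonal, hadamardMatrix, det_fin_two_of]
    norm_num [g, Fin.prod_univ_two, hg₀_pos.ne', hg₁_pos.ne']
  have hgram : Ψᴴ * Ψ = (diagonal g * hadamardMatrix)ᴴ * (diagonal g * hadamardMatrix) := by
    have hsq_add : (g₀ : ℂ) ^ 2 + g₁ ^ 2 = 1 := by
      exact_mod_cast (by linarith : g₀ ^ 2 + g₁ ^ 2 = 1)
    have hsq_sub : (g₀ : ℂ) ^ 2 - g₁ ^ 2 = c := by
      exact_mod_cast (by linarith : g₀ ^ 2 - g₁ ^ 2 = c)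
    rw [hΨ]
    ext i j
    fin_cases i <;> fin_cases j <;>
      simp [g, hadamardMatrix, mul_apply, Fin.sum_univ_two]
    exacts [by linear_combination -hsq_add, by linear_combination -hsq_sub,
      by linear_combination -hsq_sub, by linear_combination -hsq_add]
  obtain ⟨V, hV, rfl⟩ := exists_isometry_mul_eq hΦ hgram
  rw [funext (pureProductStates_mul V _)]
  refine Antidistinguishable.conj_isometry ?_ (conjTranspose_kronecker_mul_self hV hV)
  refine antidistinguishable_pureProductStates_diagonal_mul_hadamardMatrix g
    (u := fun κ => !![1, z; z, y] κ.1 κ.2) ?_ ?_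
  · intro κ
    fin_cases κ <;> simp [hy, hz]
  · simp only [Fintype.sum_prod_type, Fin.sum_univ_two, of_apply, cons_val', cons_val_zero,
      cons_val_one, empty_val', cons_val_fin_one, g]
    push_cast at hyz
    linear_combination hyz

theorem rankOne_smul {d : ℕ} (ψ : EuclideanSpace ℂ (Fin d)) {ω : ℂ} (hω : ‖ω‖ = 1) :
    rankOne (ω • ψ) = rankOne ψ := by
  ext a b
  have hωω : ω * (starRingEnd ℂ) ω = 1 := by rw [Complex.mul_conj', hω]; norm_num
  simp only [rankOne, of_apply, PiLp.smul_apply, smul_eq_mul, map_mul]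
  linear_combination ψ a * (starRingEnd ℂ) (ψ b) * hωω

theorem stmt4_general (d : ℕ)
    (ψ : Fin 2 → EuclideanSpace ℂ (Fin d)) (hψ : ∀ i, ‖ψ i‖ = 1)
    (hover : ‖(inner ℂ (ψ 0) (ψ 1) : ℂ)‖ ^ 2 ≤ 1 / 2) :
    ∃ E : Fin 2 → Fin 2 → Matrix (Fin d × Fin d) (Fin d × Fin d) ℂ,
      (∀ j k, (E j k).PosSemidef) ∧
      (∑ j, ∑ k, E j k) = 1 ∧
      ∀ j k,
        (E j k * Matrix.kroneckerMap (· * ·) (rankOne (ψ j)) (rankOne (ψ k))).trace = 0 := by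
  obtain ⟨ω, hω, hωs⟩ := Complex.exists_norm_eq_mul_self (inner ℂ (ψ 0) (ψ 1))
  let ψ' : Fin 2 → EuclideanSpace ℂ (Fin d) := ![ψ 0, ω • ψ 1]
  have hstates : ∀ j, rankOne (ψ' j) = rankOne (ψ j) := by
    intro j
    fin_cases j
    exacts [rfl, rankOne_smul _ hω]
  let Ψ : Matrix (Fin d) (Fin 2) ℂ := of fun x j => ψ' j x
  have hΨ : Ψᴴ * Ψ = !![1, (‖inner ℂ (ψ 0) (ψ 1)‖ : ℂ); ‖inner ℂ (ψ 0) (ψ 1)‖, 1] := by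
    have hinner : ∀ i j, (Ψᴴ * Ψ) i j = inner ℂ (ψ' i) (ψ' j) := fun i j => by
      simp [Ψ, mul_apply, EuclideanSpace.inner_eq_star_dotProduct, dotProduct, mul_comm]
    ext i j
    rw [hinner]
    fin_cases i <;> fin_cases j <;> simp [ψ', norm_smul, hψ, hω]
    · exact hωs.symm
    · rw [← inner_conj_symm, ← map_mul, mul_comm, ← hωs, Complex.conj_ofReal]
  obtain ⟨E, hE, hsum, htr⟩ := antidistinguishable_pureProductStates hΨ hover
  refine ⟨fun j k => E (j, k), fun j k => hE _, by rwa [Fintype.sum_prod_type] at hsum,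
    fun j k => ?_⟩
  rw [← hstates j, ← hstates k]
  exact htr (j, k)

/-- For unit vectors `ψ₀, ψ₁` with `‖⟪ψ₀, ψ₁⟫‖² ≤ 1/2`, the four product states
`ρ_j ⊗ ρ_k` are antidistinguishable: there is a POVM `(E_{jk})` with
`Tr(E_{jk} (ρ_j ⊗ ρ_k)) = 0` for all `j, k`. -/
theorem stmt4 (d : ℕ) (hd : 2 ≤ d)
    (ψ : Fin 2 → EuclideanSpace ℂ (Fin d)) (hψ : ∀ i, ‖ψ i‖ = 1)
    (hover : ‖(inner ℂ (ψ 0) (ψ 1) : ℂ)‖ ^ 2 ≤ 1 / 2) :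
    ∃ E : Fin 2 → Fin 2 → Matrix (Fin d × Fin d) (Fin d × Fin d) ℂ,
      (∀ j k, (E j k).PosSemidef) ∧
      (∑ j, ∑ k, E j k) = 1 ∧
      ∀ j k,
        (E j k * Matrix.kroneckerMap (· * ·) (rankOne (ψ j)) (rankOne (ψ k))).trace = 0 :=
  stmt4_general d ψ hψ hover
end

section
/- Failure of maximal ψ-epistemicity implies preparation contextuality of the maximally mixed state. Concretely: let d ≥ 2 be a natural number, let μ, μ⊥, ν, ν⊥ be probability measures on a measurable space (Λ, Σ), and let f : Λ → ℝ be measurable with 0 ≤ f(λ) ≤ 1 for every λ. Suppose (i) there exists a measurable set Ω with ν(Ω) = 1 and ∫_Ω f dμ < ∫_Λ f dμ, and (ii) ∫_Λ f dν⊥ = 0. Then the two convex mixtures are distinct measures: (1/d)·μ + ((d−1)/d)·μ⊥ ≠ (1/d)·ν + ((d−1)/d)·ν⊥. -/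
/-! The property "`f` vanishes off `Ω`" holds almost surely for `ν` (which is concentrated on `Ω`)
and for `ν⊥` (where the `[0,1]`-valued `f` has integral zero), hence for their mixture. If the two
mixtures were equal, it would hold almost surely for `μ`, which carries the positive weight `1/d`
in the other mixture; but then `∫_Ω f dμ = ∫ f dμ`. -/

open MeasureTheory
open scoped ENNReal

namespace MeasureTheory

variable {Λ : Type*} [MeasurableSpace Λ]

lemma ae_of_smul_add_smul_eq {μ μ' ν ν' : Measure Λ} {a b a' b' : ℝ≥0∞} {p : Λ → Prop}
    (ha : a ≠ 0) (h : a • μ + b • μ' = a' • ν + b' • ν')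
    (hν : ∀ᵐ x ∂ν, p x) (hν' : ∀ᵐ x ∂ν', p x) : ∀ᵐ x ∂μ, p x := by
  have hmix : ∀ᵐ x ∂(a • μ + b • μ'), p x := by
    rw [h, ae_add_measure_iff]
    exact ⟨Measure.ae_smul_measure hν a', Measure.ae_smul_measure hν' b'⟩
  have hsmul := (ae_add_measure_iff.mp hmix).1
  rw [ae_iff, Measure.smul_apply, smul_eq_mul, mul_eq_zero] at hsmul
  exact ae_iff.mpr (hsmul.resolve_left ha)

lemma ae_eq_zero_of_integral_eq_zero_of_bounded {μ : Measure Λ} [IsFiniteMeasure μ]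
    {f : Λ → ℝ} {C : ℝ} (hf : Measurable f) (hf0 : 0 ≤ f) (hfC : ∀ x, f x ≤ C)
    (h : ∫ x, f x ∂μ = 0) : f =ᵐ[μ] 0 := by
  have hint : Integrable f μ := Integrable.of_bound hf.aestronglyMeasurable C
    (ae_of_all _ fun x => (Real.norm_of_nonneg (hf0 x)).trans_le (hfC x))
  exact (integral_eq_zero_iff_of_nonneg hf0 hint).mp h

end MeasureTheory

theorem stmt7_general {Λ : Type*} [MeasurableSpace Λ] (d : ℕ)
    (μ μperp ν νperp : Measure Λ)
    [IsProbabilityMeasure ν] [IsProbabilityMeasure νperp]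
    (f : Λ → ℝ) (hf : Measurable f)
    (hf0 : ∀ l, 0 ≤ f l) (hf1 : ∀ l, f l ≤ 1)
    (hi : ∃ Ω : Set Λ, MeasurableSet Ω ∧ ν Ω = 1 ∧
      ∫ l in Ω, f l ∂μ < ∫ l, f l ∂μ)
    (hii : ∫ l, f l ∂νperp = 0) :
    (1 / (d : ℝ≥0∞)) • μ + (((d : ℝ≥0∞) - 1) / d) • μperp ≠
      (1 / (d : ℝ≥0∞)) • ν + (((d : ℝ≥0∞) - 1) / d) • νperp := by
  intro hmix
  obtain ⟨Ω, hΩ, hνΩ, hlt⟩ := hi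
  have hνae : ∀ᵐ l ∂ν, l ∈ Ω := mem_ae_iff.mpr ((prob_compl_eq_zero_iff hΩ).mpr hνΩ)
  have hν : ∀ᵐ l ∂ν, l ∉ Ω → f l = 0 := hνae.mono fun _ hl hl' => absurd hl hl'
  have hνperp : ∀ᵐ l ∂νperp, l ∉ Ω → f l = 0 :=
    (ae_eq_zero_of_integral_eq_zero_of_bounded hf hf0 hf1 hii).mono fun _ hl _ => hl
  have hμ : ∀ᵐ l ∂μ, l ∉ Ω → f l = 0 :=
    ae_of_smul_add_smul_eq (by simp) hmix hν hνperp
  exact hlt.ne (setIntegral_eq_integral_of_ae_compl_eq_zero hμ)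

/-- Failure of maximal ψ-epistemicity implies preparation contextuality of the maximally
mixed state: given probability measures `μ, μ⊥, ν, ν⊥` and a `[0,1]`-valued measurable
response function `f` such that (i) some measurable `Ω` has `ν Ω = 1` but
`∫_Ω f dμ < ∫ f dμ`, and (ii) `∫ f dν⊥ = 0`, the two convex mixtures
`(1/d)μ + ((d−1)/d)μ⊥` and `(1/d)ν + ((d−1)/d)ν⊥` are distinct measures. -/
theorem stmt7 {Λ : Type*} [MeasurableSpace Λ] (d : ℕ) (hd : 2 ≤ d)
    (μ μperp ν νperp : Measure Λ)
    [IsProbabilityMeasure μ] [IsProbabilityMeasure μperp]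
    [IsProbabilityMeasure ν] [IsProbabilityMeasure νperp]
    (f : Λ → ℝ) (hf : Measurable f)
    (hf0 : ∀ l, 0 ≤ f l) (hf1 : ∀ l, f l ≤ 1)
    (hi : ∃ Ω : Set Λ, MeasurableSet Ω ∧ ν Ω = 1 ∧
      ∫ l in Ω, f l ∂μ < ∫ l, f l ∂μ)
    (hii : ∫ l, f l ∂νperp = 0) :
    (1 / (d : ℝ≥0∞)) • μ + (((d : ℝ≥0∞) - 1) / d) • μperp ≠
      (1 / (d : ℝ≥0∞)) • ν + (((d : ℝ≥0∞) - 1) / d) • νperp :=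
  stmt7_general d μ μperp ν νperp f hf hf0 hf1 hi hii
end

section
/- Let d ≥ 3 and d' ≥ d be natural numbers and let e : Fin d → EuclideanSpace ℂ (Fin d') be an orthonormal family of vectors. Set ψ := (1/√d)·Σ_{j ∈ Fin d} e_j. Then for every real number t with 0 ≤ t ≤ √((d−1)/d) there exist real phases θ_1, …, θ_{d−1} such that ⟪φ, ψ⟫ = t, where φ := (1/√(d−1))·Σ_{j=1}^{d−1} exp(i·θ_j)·e_j; that is, the phases may be chosen so that the inner product of φ with ψ is real and takes any prescribed value between 0 and √((d−1)/d). -/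
/-!
By orthonormality the inner product is `conj (∑_{j ≠ 0} exp (i θ_j)) / (√(d-1) √d)`, so it
suffices that the `d - 1` phases sum to the real number `x := t √(d-1) √d ∈ [0, d-1]`. Every real
`x` with `|x| ≤ n`, `n ≥ 2`, is a sum of `n` unit complex numbers: for `n = 2` take
`exp (iα) + exp (-iα) = 2 cos α`, and for larger `n` split off `±1` according to the sign of `x`.
-/

open Complex Finset

theorem exists_exp_add_exp_neg_eq {x : ℝ} (hx : |x| ≤ 2) :
    ∃ α : ℝ, exp (I * α) + exp (I * (-α : ℝ)) = x := by
  obtain ⟨hlo, hhi⟩ := abs_le.mp hx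
  refine ⟨Real.arccos (x / 2), ?_⟩
  have hcos : Real.cos (Real.arccos (x / 2)) = x / 2 :=
    Real.cos_arccos (by linarith) (by linarith)
  rw [ofReal_neg, mul_comm I, mul_comm I, ← two_cos, ← ofReal_cos, hcos]
  push_cast
  ring

theorem exists_sum_exp_eq_of_abs_le {ι : Type*} [DecidableEq ι] (s : Finset ι) (hs : 2 ≤ #s)
    (x : ℝ) (hx : |x| ≤ #s) : ∃ θ : ι → ℝ, ∑ j ∈ s, exp (I * θ j) = x := by
  induction hn : #s generalizing s x with
  | zero => omega
  | succ n ih =>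
    rw [hn] at hx
    rcases Nat.lt_or_ge n 2 with hn2 | hn2
    · obtain rfl : n = 1 := by omega
      obtain ⟨a, b, hab, rfl⟩ := card_eq_two.mp hn
      obtain ⟨α, hα⟩ := exists_exp_add_exp_neg_eq (x := x) (by norm_num at hx; linarith)
      refine ⟨fun j => if j = a then α else -α, ?_⟩
      simpa [sum_pair hab, hab.symm] using hα
    · obtain ⟨a, ha⟩ := card_pos.mp (by omega : 0 < #s)
      have hn2' : (2 : ℝ) ≤ n := by exact_mod_cast hn2
      rw [abs_le] at hx
      push_cast at hx
      obtain ⟨φ, u, hu, hxu⟩ : ∃ φ u : ℝ, exp (I * φ) = u ∧ |x - u| ≤ n := by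
        rcases le_total 0 x with hx0 | hx0
        · refine ⟨0, 1, by simp, abs_le.mpr ⟨by linarith, by linarith⟩⟩
        · refine ⟨Real.pi, -1, by rw [mul_comm, exp_pi_mul_I]; push_cast; rfl,
            abs_le.mpr ⟨by linarith, by linarith⟩⟩
      have hcard : #(s.erase a) = n := by rw [card_erase_of_mem ha]; omega
      obtain ⟨θ, hθ⟩ := ih (s.erase a) (by omega) (x - u) (by rwa [hcard]) hcard
      refine ⟨Function.update θ a φ, ?_⟩
      rw [← add_sum_erase s _ ha, Function.update_self, hu,
        sum_congr rfl fun j hj => by rw [Function.update_of_ne (ne_of_mem_erase hj)], hθ]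
      push_cast
      ring

theorem Orthonormal.inner_sum_smul_sum {ι E : Type*} [Fintype ι] [NormedAddCommGroup E]
    [InnerProductSpace ℂ E] {v : ι → E} (hv : Orthonormal ℂ v) (l : ι → ℂ) (s : Finset ι) :
    inner ℂ (∑ j ∈ s, l j • v j) (∑ k, v k) = ∑ j ∈ s, (starRingEnd ℂ) (l j) := by
  have hv1 : ∀ j, inner ℂ (v j) (∑ k, v k) = 1 := fun j => by
    simpa only [one_smul] using hv.inner_right_fintype (fun _ => (1 : ℂ)) j
  simp only [sum_inner, inner_smul_left, hv1, mul_one]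

/-- Let `d ≥ 3`, `d' ≥ d`, and let `e` be an orthonormal family of `d` vectors in `ℂ^{d'}`.
Set `ψ := (1/√d)·Σ_j e_j`.  Then for every `t` with `0 ≤ t ≤ √((d−1)/d)` there are phases
`θ_j` such that the vector `φ := (1/√(d−1))·Σ_{j ≠ 0} exp(i θ_j)·e_j` has inner product
`⟪φ, ψ⟫ = t`. -/
theorem stmt11 (d d' : ℕ) (hd : 3 ≤ d)
    (e : Fin d → EuclideanSpace ℂ (Fin d')) (he : Orthonormal ℂ e)
    (t : ℝ) (ht0 : 0 ≤ t) (ht1 : t ≤ Real.sqrt (((d : ℝ) - 1) / d)) :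
    ∃ θ : Fin d → ℝ,
      (inner ℂ
        ((1 / (Real.sqrt ((d : ℝ) - 1) : ℂ)) •
          ∑ j ∈ Finset.univ.filter (fun j : Fin d => j ≠ ⟨0, by omega⟩),
            Complex.exp (Complex.I * (θ j : ℂ)) • e j)
        ((1 / (Real.sqrt d : ℂ)) • ∑ j, e j) : ℂ) = (t : ℂ) := by
  set S := univ.filter (fun j : Fin d => j ≠ ⟨0, by omega⟩)
  have hS : (#S : ℝ) = d - 1 := by
    rw [show S = univ.erase _ from filter_ne' _ _, card_erase_of_mem (mem_univ _), card_univ,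
      Fintype.card_fin, Nat.cast_sub (by omega), Nat.cast_one]
  have hd3 : (3 : ℝ) ≤ d := by exact_mod_cast hd
  have hd1 : (0 : ℝ) < d - 1 := by linarith
  set x := t * (√((d : ℝ) - 1) * √d)
  have hx : |x| ≤ #S := by
    rw [abs_of_nonneg (by positivity), hS]
    calc x ≤ √(((d : ℝ) - 1) / d) * (√((d : ℝ) - 1) * √d) :=
          mul_le_mul_of_nonneg_right ht1 (by positivity)
      _ = d - 1 := by
        rw [Real.sqrt_div hd1.le, div_mul_eq_mul_div, ← mul_assoc, Real.mul_self_sqrt hd1.le,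
          mul_div_assoc, div_self (by positivity), mul_one]
  have hS2 : 2 ≤ #S := by rw [← Nat.cast_le (α := ℝ), hS]; norm_num; linarith
  obtain ⟨θ, hθ⟩ := exists_sum_exp_eq_of_abs_le S hS2 x hx
  refine ⟨θ, ?_⟩
  rw [inner_smul_left, inner_smul_right, he.inner_sum_smul_sum, ← map_sum, hθ]
  simp only [x, map_div₀, map_one, conj_ofReal]
  have : (√((d : ℝ) - 1) : ℂ) ≠ 0 := by exact_mod_cast (Real.sqrt_pos.mpr hd1).ne'
  have : (√(d : ℝ) : ℂ) ≠ 0 := by exact_mod_cast (Real.sqrt_pos.mpr (by linarith)).ne'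
  push_cast
  field_simp
end

section
/- Let d ≥ 3 and let ψ, φ ∈ EuclideanSpace ℂ (Fin d) be unit vectors with ⟪φ, ψ⟫ ≠ 0 (nonorthogonal) and ‖⟪φ, ψ⟫‖² ≤ (d−1)/d. Then there exist unitary operators U_j (j ∈ Fin d) on EuclideanSpace ℂ (Fin d) and an orthonormal basis (b_j)_{j ∈ Fin d} such that U_j ψ = ψ for every j and ⟪b_j, U_j φ⟫ = 0 for every j; that is, every U_j leaves ψ invariant, and the family of states {U_j φ} is antidistinguished by the projective measurement in the basis (b_j). -/
/-!
Choose an orthonormal basis `b` for which `ψ` is unbiased, `‖⟪b j, ψ⟫‖² = 1/d` (transport the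
uniform superposition of any basis to `ψ`). The unitaries fixing `ψ` act transitively on the
vectors with prescribed norm and prescribed inner product with `ψ`, so for each `j` it suffices to
find a unit vector `φ'` with `⟪ψ, φ'⟫ = ⟪ψ, φ⟫` and `φ' ⊥ b j`. In dimension at least three such a
vector exists as soon as `‖⟪ψ, φ⟫‖² + ‖⟪b j, ψ⟫‖² ≤ 1`, i.e. `‖⟪φ, ψ⟫‖² ≤ (d - 1)/d`.
-/

open Module
open scoped InnerProductSpace

section

variable {𝕜 E : Type*} [RCLike 𝕜] [NormedAddCommGroup E] [InnerProductSpace 𝕜 E]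

variable (𝕜) in
theorem inner_sub_inner_smul_self_eq_zero {x : E} (hx : ‖x‖ = 1) (y : E) :
    ⟪x, y - ⟪x, y⟫_𝕜 • x⟫_𝕜 = 0 := by
  rw [inner_sub_right, inner_smul_right, inner_self_eq_norm_sq_to_K, hx]
  simp

variable (𝕜) in
theorem norm_sq_eq_norm_inner_sq_add_norm_sub_sq {x : E} (hx : ‖x‖ = 1) (y : E) :
    ‖y‖ ^ 2 = ‖⟪x, y⟫_𝕜‖ ^ 2 + ‖y - ⟪x, y⟫_𝕜 • x‖ ^ 2 := by
  have h := norm_add_sq_eq_norm_sq_add_norm_sq_of_inner_eq_zero (⟪x, y⟫_𝕜 • x)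
    (y - ⟪x, y⟫_𝕜 • x)
    (by rw [inner_smul_left, inner_sub_inner_smul_self_eq_zero 𝕜 hx, mul_zero])
  rw [add_sub_cancel, norm_smul, hx, mul_one] at h
  simpa only [sq] using h

theorem norm_add_sqrt_smul_eq_one {p e : E} (hp : ‖p‖ ≤ 1) (he : ‖e‖ = 1)
    (hpe : ⟪p, e⟫_𝕜 = 0) :
    ‖p + ((√(1 - ‖p‖ ^ 2) : ℝ) : 𝕜) • e‖ = 1 := by
  have hsq : 0 ≤ 1 - ‖p‖ ^ 2 := by nlinarith [norm_nonneg p]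
  have h := norm_add_sq_eq_norm_sq_add_norm_sq_of_inner_eq_zero p
    (((√(1 - ‖p‖ ^ 2) : ℝ) : 𝕜) • e) (by rw [inner_smul_right, hpe, mul_zero])
  rw [norm_smul, RCLike.norm_ofReal, he, mul_one, abs_of_nonneg (Real.sqrt_nonneg _),
    Real.mul_self_sqrt hsq] at h
  rw [← pow_eq_one_iff_of_nonneg (norm_nonneg _) two_ne_zero, sq, h]
  ring

variable [FiniteDimensional 𝕜 E]

theorem Orthonormal.exists_orthonormalBasis_apply_castLE {k : ℕ} {v : Fin k → E}
    (hv : Orthonormal 𝕜 v) (hk : k ≤ finrank 𝕜 E) :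
    ∃ B : OrthonormalBasis (Fin (finrank 𝕜 E)) 𝕜 E, ∀ i, B (Fin.castLE hk i) = v i := by
  have hinj : Function.Injective (Fin.castLE hk) := Fin.castLE_injective hk
  set v' := Function.extend (Fin.castLE hk) v 0
  have hrestrict : (Set.range (Fin.castLE hk)).domRestrict v' =
      v ∘ (Equiv.ofInjective _ hinj).symm := by
    ext ⟨_, i, rfl⟩ : 1
    exact (hinj.extend_apply v 0 i).trans (by simp)
  obtain ⟨B, hB⟩ := Orthonormal.exists_orthonormalBasis_extension_of_card_eq
    (Fintype.card_fin _).symm (s := Set.range (Fin.castLE hk))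
    (hrestrict ▸ hv.comp _ (Equiv.injective _))
  exact ⟨B, fun i => (hB _ ⟨i, rfl⟩).trans (hinj.extend_apply v 0 i)⟩

theorem Orthonormal.exists_linearIsometryEquiv_comp_eq {k : ℕ} {v w : Fin k → E}
    (hv : Orthonormal 𝕜 v) (hw : Orthonormal 𝕜 w) : ∃ U : E ≃ₗᵢ[𝕜] E, U ∘ v = w := by
  have hk : k ≤ finrank 𝕜 E := by simpa using hv.linearIndependent.fintype_card_le_finrank
  obtain ⟨B, hB⟩ := hv.exists_orthonormalBasis_apply_castLE hk
  obtain ⟨B', hB'⟩ := hw.exists_orthonormalBasis_apply_castLE hk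
  refine ⟨B.equiv B' (.refl _), funext fun i => ?_⟩
  simp [← hB, ← hB']

theorem exists_norm_eq_one_inner_eq_zero_of_two_lt_finrank (h : 2 < finrank 𝕜 E) (x y : E) :
    ∃ e : E, ‖e‖ = 1 ∧ ⟪x, e⟫_𝕜 = 0 ∧ ⟪y, e⟫_𝕜 = 0 := by
  set K := Submodule.span 𝕜 (Set.range ![x, y])
  have hK : K ≠ ⊤ := by
    intro hK
    have h2 : finrank 𝕜 K ≤ 2 :=
      (finrank_range_le_card (R := 𝕜) ![x, y]).trans_eq (Fintype.card_fin 2)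
    rw [hK, finrank_top] at h2
    omega
  obtain ⟨z, hzK, hz⟩ := Submodule.exists_mem_ne_zero_of_ne_bot
    (mt Submodule.orthogonal_eq_bot_iff.mp hK)
  have hsmul : ((‖z‖⁻¹ : 𝕜) • z) ∈ Kᗮ := Kᗮ.smul_mem _ hzK
  refine ⟨_, norm_smul_inv_norm (𝕜 := 𝕜) hz, ?_, ?_⟩ <;>
    exact Submodule.inner_right_of_mem_orthogonal (Submodule.subset_span (by simp)) hsmul

theorem exists_linearIsometryEquiv_fix_apply_eq_of_inner_eq {ψ φ φ' : E} (hψ : ‖ψ‖ = 1)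
    (hinner : ⟪ψ, φ⟫_𝕜 = ⟪ψ, φ'⟫_𝕜) (hnorm : ‖φ‖ = ‖φ'‖) :
    ∃ U : E ≃ₗᵢ[𝕜] E, U ψ = ψ ∧ U φ = φ' := by
  set a := ⟪ψ, φ⟫_𝕜
  have hφ : φ = a • ψ + (φ - a • ψ) := (add_sub_cancel _ _).symm
  have hφ' : φ' = a • ψ + (φ' - a • ψ) := (add_sub_cancel _ _).symm
  set v := φ - a • ψ
  set v' := φ' - a • ψ
  have hv : ⟪ψ, v⟫_𝕜 = 0 := inner_sub_inner_smul_self_eq_zero 𝕜 hψ φ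
  have hv' : ⟪ψ, v'⟫_𝕜 = 0 := by
    have h := inner_sub_inner_smul_self_eq_zero 𝕜 hψ φ'
    rwa [← hinner] at h
  have hvv' : ‖v‖ = ‖v'‖ := by
    have h := norm_sq_eq_norm_inner_sq_add_norm_sub_sq 𝕜 hψ φ
    rw [hnorm, norm_sq_eq_norm_inner_sq_add_norm_sub_sq 𝕜 hψ φ', ← hinner, add_right_inj] at h
    exact (pow_left_inj₀ (norm_nonneg _) (norm_nonneg _) two_ne_zero).mp h.symm
  by_cases hv0 : v = 0
  · have hv'0 : v' = 0 := norm_eq_zero.mp (hvv' ▸ norm_eq_zero.mpr hv0)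
    exact ⟨.refl 𝕜 E, rfl, by rw [hφ, hφ', hv0, hv'0]; rfl⟩
  have hv'0 : v' ≠ 0 := norm_ne_zero_iff.mp (hvv' ▸ norm_ne_zero_iff.mpr hv0)
  set r : 𝕜 := (‖v‖ : 𝕜)
  have hr : r ≠ 0 := by simpa [r] using hv0
  obtain ⟨U, hU⟩ := Orthonormal.exists_linearIsometryEquiv_comp_eq (𝕜 := 𝕜)
    (v := ![ψ, r⁻¹ • v]) (w := ![ψ, r⁻¹ • v'])
    (by simp [hψ, hv, inner_smul_right, r, norm_smul_inv_norm hv0])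
    (by simp [hψ, hv', inner_smul_right, r, hvv', norm_smul_inv_norm hv'0])
  have hUψ : U ψ = ψ := congrFun hU 0
  have hUv : U v = v' := by
    have h := congrFun hU 1
    simp only [Function.comp_apply, Matrix.cons_val_one, Matrix.cons_val_zero,
      LinearIsometryEquiv.map_smul] at h
    exact smul_right_injective E (inv_ne_zero hr) h
  refine ⟨U, hUψ, ?_⟩
  rw [hφ, map_add, map_smul, hUψ, hUv, ← hφ']

theorem exists_norm_eq_one_inner_eq_inner_eq_zero (h : 2 < finrank 𝕜 E) {ψ c : E}
    (hψ : ‖ψ‖ = 1) (hc : ‖c‖ = 1) {a : 𝕜} (ha : ‖a‖ ^ 2 + ‖⟪c, ψ⟫_𝕜‖ ^ 2 ≤ 1) :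
    ∃ φ : E, ‖φ‖ = 1 ∧ ⟪ψ, φ⟫_𝕜 = a ∧ ⟪c, φ⟫_𝕜 = 0 := by
  set u := ψ - ⟪c, ψ⟫_𝕜 • c
  have hcu : ⟪c, u⟫_𝕜 = 0 := inner_sub_inner_smul_self_eq_zero 𝕜 hc ψ
  have hau : ‖a‖ ≤ ‖u‖ := by
    have h := norm_sq_eq_norm_inner_sq_add_norm_sub_sq 𝕜 hc ψ
    rw [hψ] at h
    exact (pow_le_pow_iff_left₀ (norm_nonneg _) (norm_nonneg _) two_ne_zero).mp (by linarith)
  have hψu : ⟪ψ, u⟫_𝕜 = ((‖u‖ ^ 2 : ℝ) : 𝕜) := by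
    calc ⟪ψ, u⟫_𝕜 = ⟪u + ⟪c, ψ⟫_𝕜 • c, u⟫_𝕜 := by rw [sub_add_cancel]
      _ = ((‖u‖ ^ 2 : ℝ) : 𝕜) := by
        rw [inner_add_left, inner_smul_left, hcu, mul_zero, add_zero, inner_self_eq_norm_sq_to_K]
        norm_cast
  -- `u` is the component of `ψ` orthogonal to `c`; if `u = 0` then `a = 0`, so the junk
  -- value of the division by `‖u‖ ^ 2` below is harmless.
  set p := (a / ((‖u‖ ^ 2 : ℝ) : 𝕜)) • u
  have hψp : ⟪ψ, p⟫_𝕜 = a := by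
    rw [inner_smul_right, hψu]
    refine div_mul_cancel_of_imp fun hu => ?_
    have hu0 : ‖u‖ = 0 := by simpa using hu
    exact norm_le_zero_iff.mp (hu0 ▸ hau)
  have hcp : ⟪c, p⟫_𝕜 = 0 := by rw [inner_smul_right, hcu, mul_zero]
  have hp : ‖p‖ ≤ 1 := by
    rw [norm_smul, norm_div, RCLike.norm_ofReal, abs_of_nonneg (by positivity)]
    rcases (norm_nonneg u).eq_or_lt with hu | hu
    · simp [← hu]
    · rw [sq, div_mul_eq_mul_div, mul_div_mul_right _ _ hu.ne', div_le_one hu]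
      exact hau
  obtain ⟨e, he, hψe, hce⟩ := exists_norm_eq_one_inner_eq_zero_of_two_lt_finrank h ψ c
  have hpe : ⟪p, e⟫_𝕜 = 0 := by
    rw [inner_smul_left, inner_sub_left, inner_smul_left, hψe, hce]
    simp
  refine ⟨_, norm_add_sqrt_smul_eq_one hp he hpe, ?_, ?_⟩
  · rw [inner_add_right, hψp, inner_smul_right, hψe, mul_zero, add_zero]
  · rw [inner_add_right, hcp, inner_smul_right, hce, mul_zero, add_zero]

theorem exists_orthonormalBasis_norm_inner_sq_eq {ι : Type*} [Fintype ι]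
    (hι : finrank 𝕜 E = Fintype.card ι) {ψ : E} (hψ : ‖ψ‖ = 1) :
    ∃ b : OrthonormalBasis ι 𝕜 E, ∀ j, ‖⟪b j, ψ⟫_𝕜‖ ^ 2 = (Fintype.card ι : ℝ)⁻¹ := by
  have hn : (Fintype.card ι : ℝ) ≠ 0 := by
    have : Nontrivial E := nontrivial_of_ne ψ 0 (norm_ne_zero_iff.mp (by simp [hψ]))
    exact_mod_cast (hι ▸ Module.finrank_pos (R := 𝕜) (M := E)).ne'
  let e : OrthonormalBasis ι 𝕜 E :=
    (stdOrthonormalBasis 𝕜 E).reindex (Fintype.equivFinOfCardEq hι.symm).symm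
  set ψ₀ := e.repr.symm (WithLp.toLp 2 fun _ => (((√(Fintype.card ι))⁻¹ : ℝ) : 𝕜))
  have heψ₀ : ∀ j, ⟪e j, ψ₀⟫_𝕜 = (((√(Fintype.card ι))⁻¹ : ℝ) : 𝕜) := fun j => by
    rw [← e.repr_apply_apply, LinearIsometryEquiv.apply_symm_apply]
  have hψ₀ : ‖ψ₀‖ = 1 := by
    rw [LinearIsometryEquiv.norm_map, EuclideanSpace.norm_eq]
    simp [hn]
  obtain ⟨U, hU⟩ := Orthonormal.exists_linearIsometryEquiv_comp_eq (𝕜 := 𝕜)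
    (v := ![ψ₀]) (w := ![ψ]) (by simp [hψ₀]) (by simp [hψ])
  have hUψ₀ : U ψ₀ = ψ := congrFun hU 0
  refine ⟨e.map U, fun j => ?_⟩
  rw [OrthonormalBasis.map_apply, ← hUψ₀, LinearIsometryEquiv.inner_map_map, heψ₀]
  simp

end

theorem stmt12_general (d : ℕ) (hd : 3 ≤ d) (ψ φ : EuclideanSpace ℂ (Fin d))
    (hψ : ‖ψ‖ = 1) (hφ : ‖φ‖ = 1)
    (hle : ‖(inner ℂ φ ψ : ℂ)‖ ^ 2 ≤ ((d : ℝ) - 1) / d) :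
    ∃ (U : Fin d → (EuclideanSpace ℂ (Fin d) ≃ₗᵢ[ℂ] EuclideanSpace ℂ (Fin d)))
      (b : OrthonormalBasis (Fin d) ℂ (EuclideanSpace ℂ (Fin d))),
      (∀ j, U j ψ = ψ) ∧ ∀ j, (inner ℂ (b j) (U j φ) : ℂ) = 0 := by
  have hrank : Module.finrank ℂ (EuclideanSpace ℂ (Fin d)) = d := finrank_euclideanSpace_fin
  obtain ⟨b, hb⟩ :=
    exists_orthonormalBasis_norm_inner_sq_eq (hrank.trans (Fintype.card_fin d).symm) hψ
  have hbudget : ∀ j, ‖(inner ℂ ψ φ : ℂ)‖ ^ 2 + ‖(inner ℂ (b j) ψ : ℂ)‖ ^ 2 ≤ 1 := fun j => by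
    have hd0 : (d : ℝ) ≠ 0 := Nat.cast_ne_zero.mpr (by omega)
    rw [norm_inner_symm, hb j, Fintype.card_fin]
    calc _ ≤ ((d : ℝ) - 1) / d + (d : ℝ)⁻¹ := by gcongr
      _ = 1 := by field_simp; ring
  have hrotate : ∀ j, ∃ U : EuclideanSpace ℂ (Fin d) ≃ₗᵢ[ℂ] EuclideanSpace ℂ (Fin d),
      U ψ = ψ ∧ (inner ℂ (b j) (U φ) : ℂ) = 0 := fun j => by
    obtain ⟨φ', hφ', hψφ', hbφ'⟩ :=
      exists_norm_eq_one_inner_eq_inner_eq_zero (by omega) hψ (b.orthonormal.1 j) (hbudget j)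
    obtain ⟨U, hUψ, hUφ⟩ :=
      exists_linearIsometryEquiv_fix_apply_eq_of_inner_eq hψ hψφ'.symm (hφ.trans hφ'.symm)
    exact ⟨U, hUψ, hUφ ▸ hbφ'⟩
  choose U hUψ hUb using hrotate
  exact ⟨U, b, hUψ, hUb⟩

/-- Let `d ≥ 3` and let `ψ, φ` be nonorthogonal unit vectors in `ℂ^d` with
`‖⟪φ, ψ⟫‖² ≤ (d−1)/d`.  Then there are unitaries `U_j` (`j ∈ Fin d`) fixing `ψ` and an
orthonormal basis `(b_j)` such that `⟪b_j, U_j φ⟫ = 0` for every `j`; i.e. the states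
`U_j φ` are antidistinguished by the projective measurement in the basis `(b_j)`. -/
theorem stmt12 (d : ℕ) (hd : 3 ≤ d) (ψ φ : EuclideanSpace ℂ (Fin d))
    (hψ : ‖ψ‖ = 1) (hφ : ‖φ‖ = 1)
    (hne : (inner ℂ φ ψ : ℂ) ≠ 0)
    (hle : ‖(inner ℂ φ ψ : ℂ)‖ ^ 2 ≤ ((d : ℝ) - 1) / d) :
    ∃ (U : Fin d → (EuclideanSpace ℂ (Fin d) ≃ₗᵢ[ℂ] EuclideanSpace ℂ (Fin d)))
      (b : OrthonormalBasis (Fin d) ℂ (EuclideanSpace ℂ (Fin d))),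
      (∀ j, U j ψ = ψ) ∧ ∀ j, (inner ℂ (b j) (U j φ) : ℂ) = 0 :=
  stmt12_general d hd ψ φ hψ hφ hle
end

section
/- Ontic indifference preserves overlap: let ν and μ be probability measures on a measurable space (Λ, Σ) with variational distance D(μ, ν) < 1, let n ≥ 1, and let (γ_j)_{j ∈ Fin n} be Markov kernels from (Λ, Σ) to itself such that for each j there is a measurable set Ω_j with ν(Ω_j) = 1 and, for every λ ∈ Ω_j and every measurable Ω' ⊆ Ω_j, γ_j(λ)(Ω') = δ_λ(Ω') (the Dirac measure at λ). Let μ_j := μ bind γ_j. Then the overlap L({μ_j}_{j ∈ Fin n}) > 0. -/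
open MeasureTheory ProbabilityTheory

/-- The variational distance between two measures: the supremum over measurable sets of the
absolute difference of their (real-valued) measures. -/
noncomputable def varDist {Λ : Type*} [MeasurableSpace Λ] (μ ν : Measure Λ) : ℝ :=
  ⨆ Ω : {s : Set Λ // MeasurableSet s}, |(μ Ω.1).toReal - (ν Ω.1).toReal|

open scoped ProbabilityTheory

/-!
Let `S` be the intersection of the sets `Ω j`. It has `ν`-measure one, so
`μ(S) ≥ ν(S) - D(μ, ν) > 0`. Every kernel `γ j` fixes each point of `S`, so `μ` restricted to `S`
lies below every `μ bind γ j`; hence for any partition `(P j)`,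
`∑ j, (μ bind γ j)(P j) ≥ ∑ j, μ(P j ∩ S) ≥ μ(S)`.
-/

section

variable {Λ : Type*} [MeasurableSpace Λ]

lemma abs_measureReal_sub_le_varDist (μ ν : Measure Λ) [IsFiniteMeasure μ] [IsFiniteMeasure ν]
    {s : Set Λ} (hs : MeasurableSet s) : |μ.real s - ν.real s| ≤ varDist μ ν := by
  refine le_ciSup (f := fun Ω : {s : Set Λ // MeasurableSet s} => |μ.real Ω.1 - ν.real Ω.1|)
    ⟨μ.real .univ + ν.real .univ, ?_⟩ ⟨s, hs⟩
  rintro _ ⟨Ω, rfl⟩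
  have hμ : μ.real Ω.1 ≤ μ.real .univ := measureReal_mono (Set.subset_univ _)
  have hν : ν.real Ω.1 ≤ ν.real .univ := measureReal_mono (Set.subset_univ _)
  rw [abs_sub_le_iff]
  constructor <;> linarith [measureReal_nonneg (μ := μ) (s := Ω.1),
    measureReal_nonneg (μ := ν) (s := Ω.1)]

lemma measureReal_le_familyOverlap {ι : Type*} [Fintype ι] [Nonempty ι] {ρ : Measure Λ}
    {μ : ι → Measure Λ} [∀ i, IsFiniteMeasure (μ i)] (h : ∀ i, ρ ≤ μ i) :
    ρ.real .univ ≤ familyOverlap μ := by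
  obtain ⟨i₀⟩ := ‹Nonempty ι›
  -- `⨅` over an empty type is the junk value `0`; the partition `{univ, ∅, …, ∅}` rules that out
  have : Nonempty {P : ι → Set Λ // (∀ i, MeasurableSet (P i)) ∧
      Pairwise (Function.onFun Disjoint P) ∧ (⋃ i, P i) = Set.univ} :=
    ⟨⟨fun i _ => i = i₀, fun _ => .const _,
      fun i j hij => Set.disjoint_left.2 fun _ hi hj => hij (hi.trans hj.symm),
      Set.eq_univ_of_forall fun _ => Set.mem_iUnion.2 ⟨i₀, rfl⟩⟩⟩
  refine le_ciInf fun ⟨P, _, _, hP⟩ => ?_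
  calc ρ.real .univ = ρ.real (⋃ i, P i) := by rw [hP]
    _ ≤ ∑ i, ρ.real (P i) := measureReal_iUnion_fintype_le P
    _ ≤ ∑ i, (μ i).real (P i) := Finset.sum_le_sum fun i _ =>
        ENNReal.toReal_mono (measure_ne_top _ _) (h i (P i))

lemma restrict_le_comp_of_eq_dirac {κ : Kernel Λ Λ} (μ : Measure Λ) {Ω T : Set Λ}
    (hT : MeasurableSet T) (hTΩ : T ⊆ Ω)
    (hκ : ∀ l ∈ Ω, ∀ A ⊆ Ω, MeasurableSet A → κ l A = Measure.dirac l A) :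
    μ.restrict T ≤ κ ∘ₘ μ := by
  refine Measure.le_iff.2 fun A hA => ?_
  have hκA : ∀ l ∈ T, A.indicator 1 l ≤ κ l A := fun l hl => by
    calc A.indicator 1 l = Measure.dirac l (A ∩ T) := by
          rw [Measure.dirac_apply' l (hA.inter hT)]
          by_cases hlA : l ∈ A <;> simp [hlA, hl]
      _ = κ l (A ∩ T) := (hκ l (hTΩ hl) _ (Set.inter_subset_right.trans hTΩ) (hA.inter hT)).symm
      _ ≤ κ l A := measure_mono Set.inter_subset_left
  calc μ.restrict T A = ∫⁻ l in T, A.indicator 1 l ∂μ := (lintegral_indicator_one hA).symm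
    _ ≤ ∫⁻ l in T, κ l A ∂μ := setLIntegral_mono (κ.measurable_coe hA) hκA
    _ ≤ ∫⁻ l, κ l A ∂μ := setLIntegral_le_lintegral _ _
    _ = (κ ∘ₘ μ) A := (Measure.bind_apply hA κ.aemeasurable).symm

end

/-- Ontic indifference preserves overlap: if `D(μ, ν) < 1` and each Markov kernel `γ j` acts
as the identity (Dirac) kernel on a `ν`-measure-one set, then the family of transformed
measures `μ bind γ j` has strictly positive overlap. -/
theorem stmt13 {Λ : Type*} [MeasurableSpace Λ]
    (μ ν : Measure Λ) [IsProbabilityMeasure μ] [IsProbabilityMeasure ν]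
    (hD : varDist μ ν < 1)
    (n : ℕ) (hn : 1 ≤ n)
    (γ : Fin n → Kernel Λ Λ) [∀ j, IsMarkovKernel (γ j)]
    (hOI : ∀ j, ∃ Ω : Set Λ, MeasurableSet Ω ∧ ν Ω = 1 ∧
      ∀ l ∈ Ω, ∀ Ω' : Set Λ, Ω' ⊆ Ω → MeasurableSet Ω' →
        γ j l Ω' = Measure.dirac l Ω') :
    0 < familyOverlap (fun j => μ.bind fun l => γ j l) := by
  have : Nonempty (Fin n) := ⟨⟨0, hn⟩⟩
  choose Ω hΩ hνΩ hγ using hOI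
  have hS : MeasurableSet (⋂ j, Ω j) := .iInter hΩ
  have hνS : ν (⋂ j, Ω j) = 1 := (mem_ae_iff_prob_eq_one hS).1 <|
    Filter.iInter_mem.2 fun j => (mem_ae_iff_prob_eq_one (hΩ j)).2 (hνΩ j)
  have hμS : 0 < μ.real (⋂ j, Ω j) := by
    have := abs_measureReal_sub_le_varDist μ ν hS
    rw [measureReal_def ν, hνS, ENNReal.toReal_one, abs_sub_le_iff] at this
    linarith
  calc 0 < μ.real (⋂ j, Ω j) := hμS
    _ = (μ.restrict (⋂ j, Ω j)).real .univ := by simp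
    _ ≤ _ := measureReal_le_familyOverlap fun j =>
        restrict_le_comp_of_eq_dirac μ hS (Set.iInter_subset Ω j) (hγ j)
end

section
/- Colbeck–Renner equiprobability theorem for a pair of qubits. Let (Λ, Σ) be a measurable space and μ a probability measure on it. Suppose given, for each pair (a, b) of orthonormal bases a = (a₀, a₁) and b = (b₀, b₁) of EuclideanSpace ℂ (Fin 2), measurable functions P_{a,b}(j,k) : Λ → ℝ for j, k ∈ Fin 2, with P_{a,b}(j,k)(λ) ≥ 0 and Σ_{j,k} P_{a,b}(j,k)(λ) = 1 for every λ, such that: (parameter independence) for all bases a, b, b', all j and all λ, Σ_k P_{a,b}(j,k)(λ) = Σ_k P_{a,b'}(j,k)(λ), and for all bases a, a', b, all k and all λ, Σ_j P_{a,b}(j,k)(λ) = Σ_j P_{a',b}(j,k)(λ); and (reproduces the quantum predictions for the maximally entangled state) for all a, b, j, k, ∫ P_{a,b}(j,k) dμ = (1/2)·‖a_j(0)·b_k(0) + a_j(1)·b_k(1)‖². Then there exists a measurable set Ω with μ(Ω) = 1 such that for every λ ∈ Ω, every orthonormal basis b, and every j ∈ Fin 2, Σ_k P_{z,b}(j,k)(λ)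 = 1/2, where z = (z₀, z₁) is the standard orthonormal basis of EuclideanSpace ℂ (Fin 2). -/
/-!
Write `A θ j` for Alice's marginal probability of outcome `j` when she measures in the basis
rotated by `θ`, and `B φ k` for Bob's; parameter independence makes them well defined.
Pointwise `|A θ j - B φ j|` is at most the probability of the two anticorrelated joint outcomes,
so by the Born rule `∫ |A θ j - B φ j| ≤ sin² (θ - φ)`. Chaining from angle `0` to `π / 2` through
`2n` steps of size `π / (4n)` gives `∫ |A 0 0 - A (π/2) 0| ≤ 2n sin² (π / (4n)) ≤ π² / (8n)`.
At `π / 2` the Born rule forces `A (π/2) 0 = B (π/2) 0 = A 0 1` almost everywhere, so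
`A 0 0 = A 0 1` almost everywhere, and both equal `1/2` because they sum to one.
-/

open MeasureTheory Real

section
variable {α : Type*} [MeasurableSpace α] {μ : Measure α}

lemma integral_abs_sub_le_add {f g h : α → ℝ} (hf : Integrable f μ) (hg : Integrable g μ)
    (hh : Integrable h μ) :
    ∫ x, |f x - h x| ∂μ ≤ ∫ x, |f x - g x| ∂μ + ∫ x, |g x - h x| ∂μ := by
  have hfg : Integrable (fun x => |f x - g x|) μ := (hf.sub hg).abs
  have hgh : Integrable (fun x => |g x - h x|) μ := (hg.sub hh).abs
  rw [← integral_add hfg hgh]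
  exact integral_mono (hf.sub hh).abs (hfg.add hgh) fun x => abs_sub_le (f x) (g x) (h x)

lemma integral_abs_sub_le_of_chain {f : ℕ → α → ℝ} (hf : ∀ i, Integrable (f i) μ) {c : ℝ}
    (hc : ∀ i, ∫ x, |f i x - f (i + 1) x| ∂μ ≤ c) (n : ℕ) :
    ∫ x, |f 0 x - f n x| ∂μ ≤ n * c := by
  induction n with
  | zero => simp
  | succ n ih =>
    calc ∫ x, |f 0 x - f (n + 1) x| ∂μ
        ≤ ∫ x, |f 0 x - f n x| ∂μ + ∫ x, |f n x - f (n + 1) x| ∂μ :=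
          integral_abs_sub_le_add (hf 0) (hf n) (hf (n + 1))
      _ ≤ n * c + c := add_le_add ih (hc n)
      _ = (n + 1 : ℕ) * c := by push_cast; ring

lemma ae_eq_of_integral_abs_sub_le_zero {f g : α → ℝ} (hf : Integrable f μ) (hg : Integrable g μ)
    (h : ∫ x, |f x - g x| ∂μ ≤ 0) : f =ᵐ[μ] g := by
  have h0 : ∫ x, |f x - g x| ∂μ = 0 := le_antisymm h (integral_nonneg fun x => abs_nonneg _)
  filter_upwards [(integral_eq_zero_iff_of_nonneg (fun x => abs_nonneg _) (hf.sub hg).abs).1 h0]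
    with x hx
  exact sub_eq_zero.1 (abs_eq_zero.1 hx)
end

lemma le_zero_of_forall_le_div_nat {x c : ℝ} (h : ∀ n : ℕ, 0 < n → x ≤ c / n) : x ≤ 0 :=
  ge_of_tendsto (tendsto_const_div_atTop_nhds_zero_nat c)
    ((Filter.eventually_gt_atTop 0).mono h)

local notation "ℂ²" => EuclideanSpace ℂ (Fin 2)

noncomputable def rotBasis (θ : ℝ) : Fin 2 → ℂ² :=
  ![!₂[(cos θ : ℂ), sin θ], !₂[-sin θ, cos θ]]

lemma orthonormal_rotBasis (θ : ℝ) : Orthonormal ℂ (rotBasis θ) := by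
  rw [orthonormal_iff_ite]
  intro i j
  fin_cases i <;> fin_cases j <;>
    simp [rotBasis, PiLp.inner_apply, Fin.sum_univ_two, EuclideanSpace.norm_eq,
      -Complex.ofReal_cos, -Complex.ofReal_sin] <;> ring_nf

lemma rotBasis_zero : rotBasis 0 = fun i => EuclideanSpace.single i (1 : ℂ) := by
  funext i; ext m
  fin_cases i <;> fin_cases m <;> simp [rotBasis]

noncomputable def bornProb (a b : Fin 2 → ℂ²) (j k : Fin 2) : ℝ :=
  1 / 2 * ‖a j 0 * b k 0 + a j 1 * b k 1‖ ^ 2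

lemma bornProb_rotBasis (θ φ : ℝ) (j k : Fin 2) :
    bornProb (rotBasis θ) (rotBasis φ) j k =
      if j = k then cos (θ - φ) ^ 2 / 2 else sin (θ - φ) ^ 2 / 2 := by
  fin_cases j <;> fin_cases k <;>
    simp [bornProb, rotBasis, cos_sub, sin_sub, -Complex.ofReal_cos, -Complex.ofReal_sin,
      ← Complex.ofReal_mul, ← Complex.ofReal_add, ← Complex.ofReal_neg, Complex.norm_real] <;> ring

lemma abs_sum_sub_sum_le_add_rev {p : Fin 2 → Fin 2 → ℝ} (hp : ∀ j k, 0 ≤ p j k) (j k : Fin 2) :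
    |∑ k', p j k' - ∑ j', p j' k| ≤ p j k.rev + p j.rev k := by
  have := hp 0 0; have := hp 0 1; have := hp 1 0; have := hp 1 1
  fin_cases j <;> fin_cases k <;> simp [Fin.sum_univ_two, abs_le] <;> constructor <;> linarith

structure IsPhiPlusModel {Λ : Type*} [MeasurableSpace Λ] (μ : Measure Λ)
    (P : (Fin 2 → ℂ²) → (Fin 2 → ℂ²) → Fin 2 → Fin 2 → Λ → ℝ) : Prop where
  measurable : ∀ a b, Orthonormal ℂ a → Orthonormal ℂ b → ∀ j k, Measurable (P a b j k)
  nonneg : ∀ a b, Orthonormal ℂ a → Orthonormal ℂ b → ∀ j k l, 0 ≤ P a b j k l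
  sum_sum_eq_one : ∀ a b, Orthonormal ℂ a → Orthonormal ℂ b → ∀ l, ∑ j, ∑ k, P a b j k l = 1
  sum_snd_indep : ∀ a b b', Orthonormal ℂ a → Orthonormal ℂ b → Orthonormal ℂ b' →
    ∀ j l, ∑ k, P a b j k l = ∑ k, P a b' j k l
  sum_fst_indep : ∀ a a' b, Orthonormal ℂ a → Orthonormal ℂ a' → Orthonormal ℂ b →
    ∀ k l, ∑ j, P a b j k l = ∑ j, P a' b j k l
  integral_eq_bornProb : ∀ a b, Orthonormal ℂ a → Orthonormal ℂ b → ∀ j k,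
    ∫ l, P a b j k l ∂μ = bornProb a b j k

section Marginals

variable {Λ : Type*} (P : (Fin 2 → ℂ²) → (Fin 2 → ℂ²) → Fin 2 → Fin 2 → Λ → ℝ)

/- The reference basis `rotBasis 0` of the other party is arbitrary: by parameter independence
any orthonormal basis gives the same marginal (`sum_eq_aliceMarginal`, `sum_eq_bobMarginal`). -/
noncomputable def aliceMarginal (a : Fin 2 → ℂ²) (j : Fin 2) (l : Λ) : ℝ :=
  ∑ k, P a (rotBasis 0) j k l

noncomputable def bobMarginal (b : Fin 2 → ℂ²) (k : Fin 2) (l : Λ) : ℝ :=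
  ∑ j, P (rotBasis 0) b j k l

end Marginals

namespace IsPhiPlusModel

variable {Λ : Type*} [MeasurableSpace Λ] {μ : Measure Λ}
  {P : (Fin 2 → ℂ²) → (Fin 2 → ℂ²) → Fin 2 → Fin 2 → Λ → ℝ} {a b : Fin 2 → ℂ²}

lemma sum_eq_aliceMarginal (hP : IsPhiPlusModel μ P) (ha : Orthonormal ℂ a)
    (hb : Orthonormal ℂ b) (j : Fin 2) (l : Λ) : ∑ k, P a b j k l = aliceMarginal P a j l :=
  hP.sum_snd_indep a b _ ha hb (orthonormal_rotBasis 0) j l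

lemma sum_eq_bobMarginal (hP : IsPhiPlusModel μ P) (ha : Orthonormal ℂ a)
    (hb : Orthonormal ℂ b) (k : Fin 2) (l : Λ) : ∑ j, P a b j k l = bobMarginal P b k l :=
  hP.sum_fst_indep a _ b ha (orthonormal_rotBasis 0) hb k l

lemma sum_aliceMarginal (hP : IsPhiPlusModel μ P) (ha : Orthonormal ℂ a) (l : Λ) :
    ∑ j, aliceMarginal P a j l = 1 :=
  hP.sum_sum_eq_one a _ ha (orthonormal_rotBasis 0) l

lemma le_one (hP : IsPhiPlusModel μ P) (ha : Orthonormal ℂ a) (hb : Orthonormal ℂ b)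
    (j k : Fin 2) (l : Λ) : P a b j k l ≤ 1 := by
  have hnonneg := hP.nonneg a b ha hb
  calc P a b j k l ≤ ∑ k', P a b j k' l :=
        Finset.single_le_sum (fun k' _ => hnonneg j k' l) (Finset.mem_univ k)
    _ ≤ ∑ j', ∑ k', P a b j' k' l :=
        Finset.single_le_sum (fun j' _ => Finset.sum_nonneg fun k' _ => hnonneg j' k' l)
          (Finset.mem_univ j)
    _ = 1 := hP.sum_sum_eq_one a b ha hb l

lemma integrable [IsFiniteMeasure μ] (hP : IsPhiPlusModel μ P) (ha : Orthonormal ℂ a)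
    (hb : Orthonormal ℂ b) (j k : Fin 2) : Integrable (P a b j k) μ :=
  .of_bound (hP.measurable a b ha hb j k).aestronglyMeasurable 1 <| ae_of_all _ fun l =>
    abs_le.2 ⟨by linarith [hP.nonneg a b ha hb j k l], hP.le_one ha hb j k l⟩

lemma integrable_aliceMarginal [IsFiniteMeasure μ] (hP : IsPhiPlusModel μ P)
    (ha : Orthonormal ℂ a) (j : Fin 2) : Integrable (aliceMarginal P a j) μ := by
  unfold aliceMarginal
  exact integrable_finsetSum _ fun k _ => hP.integrable ha (orthonormal_rotBasis 0) j k

lemma integrable_bobMarginal [IsFiniteMeasure μ] (hP : IsPhiPlusModel μ P)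
    (hb : Orthonormal ℂ b) (k : Fin 2) : Integrable (bobMarginal P b k) μ := by
  unfold bobMarginal
  exact integrable_finsetSum _ fun j _ => hP.integrable (orthonormal_rotBasis 0) hb j k

lemma measurable_aliceMarginal (hP : IsPhiPlusModel μ P) (ha : Orthonormal ℂ a) (j : Fin 2) :
    Measurable (aliceMarginal P a j) := by
  unfold aliceMarginal
  exact Finset.measurable_sum _ fun k _ => hP.measurable a _ ha (orthonormal_rotBasis 0) j k

lemma integral_abs_aliceMarginal_sub_bobMarginal_le [IsFiniteMeasure μ]
    (hP : IsPhiPlusModel μ P) (ha : Orthonormal ℂ a) (hb : Orthonormal ℂ b) (j k : Fin 2) :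
    ∫ l, |aliceMarginal P a j l - bobMarginal P b k l| ∂μ ≤
      bornProb a b j k.rev + bornProb a b j.rev k := by
  rw [← hP.integral_eq_bornProb a b ha hb, ← hP.integral_eq_bornProb a b ha hb,
    ← integral_add (hP.integrable ha hb _ _) (hP.integrable ha hb _ _)]
  refine integral_mono ((hP.integrable_aliceMarginal ha j).sub
    (hP.integrable_bobMarginal hb k)).abs
    ((hP.integrable ha hb _ _).add (hP.integrable ha hb _ _)) fun l => ?_
  rw [← hP.sum_eq_aliceMarginal ha hb, ← hP.sum_eq_bobMarginal ha hb]
  exact abs_sum_sub_sum_le_add_rev (fun j k => hP.nonneg a b ha hb j k l) j k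

lemma integral_abs_aliceMarginal_rotBasis_sub_bobMarginal_le [IsFiniteMeasure μ]
    (hP : IsPhiPlusModel μ P) (θ φ : ℝ) (j k : Fin 2) :
    ∫ l, |aliceMarginal P (rotBasis θ) j l - bobMarginal P (rotBasis φ) k l| ∂μ ≤
      if j = k then sin (θ - φ) ^ 2 else cos (θ - φ) ^ 2 := by
  refine (hP.integral_abs_aliceMarginal_sub_bobMarginal_le (orthonormal_rotBasis θ)
    (orthonormal_rotBasis φ) j k).trans_eq ?_
  fin_cases j <;> fin_cases k <;> simp [bornProb_rotBasis]

lemma integral_abs_aliceMarginal_rotBasis_sub_le [IsFiniteMeasure μ]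
    (hP : IsPhiPlusModel μ P) (θ δ : ℝ) (j : Fin 2) :
    ∫ l, |aliceMarginal P (rotBasis θ) j l - aliceMarginal P (rotBasis (θ + 2 * δ)) j l| ∂μ ≤
      2 * sin δ ^ 2 := by
  have h₁ := hP.integral_abs_aliceMarginal_rotBasis_sub_bobMarginal_le θ (θ + δ) j j
  have h₂ := hP.integral_abs_aliceMarginal_rotBasis_sub_bobMarginal_le (θ + 2 * δ) (θ + δ) j j
  simp only [if_true, show θ - (θ + δ) = -δ by ring, show θ + 2 * δ - (θ + δ) = δ by ring,
    sin_neg, neg_sq] at h₁ h₂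
  simp_rw [abs_sub_comm (aliceMarginal P (rotBasis (θ + 2 * δ)) j _)] at h₂
  linarith [integral_abs_sub_le_add (hP.integrable_aliceMarginal (orthonormal_rotBasis θ) j)
    (hP.integrable_bobMarginal (orthonormal_rotBasis (θ + δ)) j)
    (hP.integrable_aliceMarginal (orthonormal_rotBasis (θ + 2 * δ)) j)]

lemma integral_abs_aliceMarginal_rotBasis_zero_sub_pi_div_two_le [IsFiniteMeasure μ]
    (hP : IsPhiPlusModel μ P) (j : Fin 2) {n : ℕ} (hn : 0 < n) :
    ∫ l, |aliceMarginal P (rotBasis 0) j l - aliceMarginal P (rotBasis (π / 2)) j l| ∂μ ≤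
      π ^ 2 / 8 / n := by
  set δ := π / (4 * n)
  have hchain := integral_abs_sub_le_of_chain
    (f := fun i : ℕ => aliceMarginal P (rotBasis (i * (2 * δ))) j)
    (fun i => hP.integrable_aliceMarginal (orthonormal_rotBasis _) j)
    (fun i => by
      simpa only [Nat.cast_succ, add_mul, one_mul]
        using hP.integral_abs_aliceMarginal_rotBasis_sub_le (i * (2 * δ)) δ j) n
  have hend : (n : ℝ) * (2 * δ) = π / 2 := by simp only [δ]; field_simp; ring
  simp only [Nat.cast_zero, zero_mul, hend] at hchain
  calc _ ≤ n * (2 * sin δ ^ 2) := hchain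
    _ ≤ n * (2 * δ ^ 2) := by gcongr ?_ * (2 * ?_); exact sin_sq_le_sq
    _ = π ^ 2 / 8 / n := by simp only [δ]; field_simp; ring

lemma aliceMarginal_rotBasis_zero_ae_eq [IsFiniteMeasure μ] (hP : IsPhiPlusModel μ P) :
    aliceMarginal P (rotBasis 0) 0 =ᵐ[μ] aliceMarginal P (rotBasis 0) 1 := by
  refine ae_eq_of_integral_abs_sub_le_zero (hP.integrable_aliceMarginal (orthonormal_rotBasis 0) 0)
    (hP.integrable_aliceMarginal (orthonormal_rotBasis 0) 1)
    (le_zero_of_forall_le_div_nat (c := π ^ 2 / 8) fun n hn => ?_)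
  have h₁ := hP.integral_abs_aliceMarginal_rotBasis_sub_bobMarginal_le (π / 2) (π / 2) 0 0
  have h₂ := hP.integral_abs_aliceMarginal_rotBasis_sub_bobMarginal_le 0 (π / 2) 1 0
  norm_num at h₁ h₂
  simp_rw [abs_sub_comm (aliceMarginal P (rotBasis 0) 1 _)] at h₂
  have hA := hP.integrable_aliceMarginal (μ := μ) (orthonormal_rotBasis 0)
  have hAπ := hP.integrable_aliceMarginal (μ := μ) (orthonormal_rotBasis (π / 2)) 0
  have hBπ := hP.integrable_bobMarginal (μ := μ) (orthonormal_rotBasis (π / 2)) 0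
  linarith [integral_abs_sub_le_add (hA 0) hAπ (hA 1), integral_abs_sub_le_add hAπ hBπ (hA 1),
    hP.integral_abs_aliceMarginal_rotBasis_zero_sub_pi_div_two_le 0 hn]

lemma ae_aliceMarginal_rotBasis_zero_eq_half [IsFiniteMeasure μ] (hP : IsPhiPlusModel μ P) :
    ∀ᵐ l ∂μ, ∀ j, aliceMarginal P (rotBasis 0) j l = 1 / 2 := by
  filter_upwards [hP.aliceMarginal_rotBasis_zero_ae_eq] with l hl j
  have hsum := hP.sum_aliceMarginal (orthonormal_rotBasis 0) l
  rw [Fin.sum_univ_two] at hsum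
  fin_cases j <;> simp only [Fin.zero_eta, Fin.mk_one] <;> linarith

end IsPhiPlusModel

/-- Colbeck–Renner equiprobability theorem for a pair of qubits.  Suppose `μ` represents the
maximally entangled two-qubit state, and for each pair `(a, b)` of orthonormal bases of
`ℂ²` the model has measurable response functions `P a b j k` (nonnegative, summing to one
pointwise) satisfying parameter independence and reproducing the Born-rule probabilities
`(1/2)·‖a j 0 · b k 0 + a j 1 · b k 1‖²`.  Then on a `μ`-measure-one set of ontic states
the marginal probability of each outcome of a measurement of the first qubit in the
standard basis `z` equals `1/2`. -/
theorem stmt15 {Λ : Type*} [MeasurableSpace Λ]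
    (μ : Measure Λ) [IsProbabilityMeasure μ]
    (P : (Fin 2 → EuclideanSpace ℂ (Fin 2)) → (Fin 2 → EuclideanSpace ℂ (Fin 2)) →
      Fin 2 → Fin 2 → Λ → ℝ)
    (hmeas : ∀ a b, Orthonormal ℂ a → Orthonormal ℂ b → ∀ j k, Measurable (P a b j k))
    (hnonneg : ∀ a b, Orthonormal ℂ a → Orthonormal ℂ b → ∀ j k l, 0 ≤ P a b j k l)
    (hsum : ∀ a b, Orthonormal ℂ a → Orthonormal ℂ b → ∀ l, ∑ j, ∑ k, P a b j k l = 1)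
    (hPIA : ∀ a b b', Orthonormal ℂ a → Orthonormal ℂ b → Orthonormal ℂ b' →
      ∀ j l, ∑ k, P a b j k l = ∑ k, P a b' j k l)
    (hPIB : ∀ a a' b, Orthonormal ℂ a → Orthonormal ℂ a' → Orthonormal ℂ b →
      ∀ k l, ∑ j, P a b j k l = ∑ j, P a' b j k l)
    (hborn : ∀ a b, Orthonormal ℂ a → Orthonormal ℂ b → ∀ j k,
      ∫ l, P a b j k l ∂μ = (1 / 2) * ‖a j 0 * b k 0 + a j 1 * b k 1‖ ^ 2) :
    ∃ Ω : Set Λ, MeasurableSet Ω ∧ μ Ω = 1 ∧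
      ∀ l ∈ Ω, ∀ b, Orthonormal ℂ b → ∀ j : Fin 2,
        ∑ k, P (fun i => EuclideanSpace.single i (1 : ℂ)) b j k l = 1 / 2 := by
  have hP : IsPhiPlusModel μ P := ⟨hmeas, hnonneg, hsum, hPIA, hPIB, hborn⟩
  have hΩ : MeasurableSet {l | ∀ j, aliceMarginal P (rotBasis 0) j l = 1 / 2} := by
    simp only [Set.ofPred_forall]
    exact .iInter fun j =>
      measurableSet_eq_fun (hP.measurable_aliceMarginal (orthonormal_rotBasis 0) j) measurable_const
  refine ⟨_, hΩ, ?_, fun l hl b hb j => ?_⟩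
  · exact ((ae_iff_measure_eq hΩ.nullMeasurableSet).1
      hP.ae_aliceMarginal_rotBasis_zero_eq_half).trans measure_univ
  · rw [← rotBasis_zero, hP.sum_eq_aliceMarginal (orthonormal_rotBasis 0) hb]
    exact hl j
end

section
/- A sometimes ψ-ontic ontological model cannot be maximally ψ-epistemic. Concretely: let μ and ν be probability measures on a measurable space (Λ, Σ) and suppose that for every finite type ι and every family of measurable functions f_i : Λ → ℝ (i ∈ ι) with f_i ≥ 0 and Σ_{i ∈ ι} f_i(λ) = 1 for every λ, and for every measurable set Ω with ν(Ω) = 1, one has ∫_Ω f_i dμ = ∫_Λ f_i dμ for every i ∈ ι. Then there is no measurable set Ω' with μ(Ω') > 0 and ν(Ω') = 0. -/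
/-!
Test the model with the two-outcome measurement "is the ontic state in `Ω'`?". Its first
outcome has `μ`-probability `μ Ω' > 0`, yet integrates to `0` over the `ν`-full set `Ω'ᶜ`.
-/

open MeasureTheory

section IndicatorPair

variable {Λ : Type*}

noncomputable def indicatorPair (s : Set Λ) : Bool → Λ → ℝ
  | true => s.indicator 1
  | false => sᶜ.indicator 1

theorem measurable_indicatorPair [MeasurableSpace Λ] {s : Set Λ} (hs : MeasurableSet s)
    (b : Bool) : Measurable (indicatorPair s b) := by
  cases b
  · exact measurable_const.indicator hs.compl
  · exact measurable_const.indicator hs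

theorem indicatorPair_nonneg (s : Set Λ) (b : Bool) (l : Λ) : 0 ≤ indicatorPair s b l := by
  cases b <;> exact Set.indicator_nonneg (fun _ _ => zero_le_one) l

theorem sum_indicatorPair (s : Set Λ) (l : Λ) : ∑ b, indicatorPair s b l = 1 := by
  by_cases h : l ∈ s <;> simp [indicatorPair, h]

end IndicatorPair

/-- A sometimes ψ-ontic ontological model cannot be maximally ψ-epistemic: if for every
finite measurement (family of nonnegative measurable response functions summing to one
pointwise) and every measurable set `Ω` of `ν`-measure one, the integral of each response
function over `Ω` against `μ` equals the full integral, then there is no measurable set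
`Ω'` with `μ Ω' > 0` and `ν Ω' = 0`. -/
theorem stmt18 {Λ : Type*} [MeasurableSpace Λ]
    (μ ν : Measure Λ) [IsProbabilityMeasure μ] [IsProbabilityMeasure ν]
    (hME : ∀ (ι : Type) [Fintype ι], ∀ f : ι → Λ → ℝ,
      (∀ i, Measurable (f i)) → (∀ i l, 0 ≤ f i l) → (∀ l, ∑ i, f i l = 1) →
      ∀ Ω : Set Λ, MeasurableSet Ω → ν Ω = 1 →
        ∀ i, ∫ l in Ω, f i l ∂μ = ∫ l, f i l ∂μ) :
    ¬ ∃ Ω' : Set Λ, MeasurableSet Ω' ∧ 0 < μ Ω' ∧ ν Ω' = 0 := by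
  rintro ⟨s, hs, hμ, hν⟩
  have hνc : ν sᶜ = 1 := (prob_compl_eq_one_iff hs).2 hν
  have key := hME Bool (indicatorPair s) (measurable_indicatorPair hs) (indicatorPair_nonneg s)
    (sum_indicatorPair s) sᶜ hs.compl hνc true
  have hzero : ∫ l in sᶜ, s.indicator (1 : Λ → ℝ) l ∂μ = 0 :=
    setIntegral_eq_zero_of_forall_eq_zero fun _ hl => Set.indicator_of_notMem hl _
  rw [indicatorPair, hzero, integral_indicator_one hs] at key
  exact (ENNReal.toReal_pos hμ.ne' (measure_ne_top μ s)).ne key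
end

section
/- In a maximally ψ-epistemic model the probability of the outcome φ is exactly the measure of its cosupport. Concretely: let μ and ν be probability measures on a measurable space (Λ, Σ), let I be a countable type, and for each i ∈ I let f_i : Λ → ℝ be measurable with 0 ≤ f_i(λ) ≤ 1 for every λ and ∫ f_i dν = 1. Suppose that for every i ∈ I and every measurable set Ω with ν(Ω) = 1 one has ∫_Ω f_i dμ = ∫_Λ f_i dμ. Then for every i ∈ I, ∫_Λ f_i dμ = μ(⋂_{j ∈ I} {λ ∈ Λ : f_j(λ) = 1}). -/
/-!
Since `f j ≤ 1` and `∫ f j dν = 1`, each `f j` equals `1` `ν`-almost everywhere, so the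
cosupport `⋂ j, {f j = 1}` (a countable intersection) has `ν`-measure one. Maximal
ψ-epistemicity then lets us restrict `∫ f i dμ` to the cosupport, where `f i = 1`.
-/

open MeasureTheory

section

variable {α : Type*} [MeasurableSpace α]

theorem ae_eq_one_of_ae_le_one_of_integral_eq_one {ν : Measure α} [IsProbabilityMeasure ν]
    {f : α → ℝ} (hle : ∀ᵐ x ∂ν, f x ≤ 1) (hint : ∫ x, f x ∂ν = 1) : ∀ᵐ x ∂ν, f x = 1 :=
  (integral_eq_iff_of_ae_le (Integrable.of_integral_ne_zero (by simp [hint]))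
    (integrable_const 1) hle).1 (by simp [hint])

theorem measure_iInter_setOf_eq_eq_one {ι β : Type*} [Countable ι] [MeasurableSpace β]
    [MeasurableSingletonClass β] {ν : Measure α} [IsProbabilityMeasure ν] {f : ι → α → β}
    (hf : ∀ j, Measurable (f j)) {b : β} (hae : ∀ j, ∀ᵐ x ∂ν, f j x = b) :
    ν (⋂ j, {x | f j x = b}) = 1 := by
  have hmeas : MeasurableSet (⋂ j, {x | f j x = b}) :=
    .iInter fun j => hf j (measurableSet_singleton b)
  rw [← measure_univ (μ := ν), ← ae_mem_iff_measure_eq hmeas.nullMeasurableSet]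
  simpa only [Set.mem_iInter, Set.mem_ofPred_eq] using ae_all_iff.2 hae

theorem setIntegral_eq_measureReal_of_eqOn_one {μ : Measure α} {f : α → ℝ} {s : Set α}
    (hs : MeasurableSet s) (hf : Set.EqOn f 1 s) : ∫ x in s, f x ∂μ = μ.real s := by
  rw [setIntegral_congr_fun hs hf, Pi.one_def, setIntegral_const, smul_eq_mul, mul_one]

end

theorem stmt19_general {Λ : Type*} [MeasurableSpace Λ]
    (μ ν : Measure Λ) [IsProbabilityMeasure ν]
    (I : Type*) [Countable I]
    (f : I → Λ → ℝ) (hmeas : ∀ i, Measurable (f i))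
    (h1 : ∀ i l, f i l ≤ 1)
    (hν : ∀ i, ∫ l, f i l ∂ν = 1)
    (hME : ∀ i, ∀ Ω : Set Λ, MeasurableSet Ω → ν Ω = 1 →
      ∫ l in Ω, f i l ∂μ = ∫ l, f i l ∂μ) :
    ∀ i, ∫ l, f i l ∂μ = (μ (⋂ j, {l : Λ | f j l = 1})).toReal := by
  intro i
  have hC : MeasurableSet (⋂ j, {l : Λ | f j l = 1}) :=
    .iInter fun j => hmeas j (measurableSet_singleton 1)
  have hνC : ν (⋂ j, {l : Λ | f j l = 1}) = 1 :=
    measure_iInter_setOf_eq_eq_one hmeas fun j =>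
      ae_eq_one_of_ae_le_one_of_integral_eq_one (.of_forall (h1 j)) (hν j)
  rw [← hME i _ hC hνC]
  exact setIntegral_eq_measureReal_of_eqOn_one hC fun l hl => Set.mem_iInter.1 hl i

/-- In a maximally ψ-epistemic model the probability of the outcome `φ` is exactly the
measure of its cosupport: if the `[0,1]`-valued measurable response functions `f i`
(`i` ranging over a countable type) satisfy `∫ f i dν = 1` and, for every measurable `Ω`
of `ν`-measure one, `∫_Ω f i dμ = ∫ f i dμ`, then for every `i`,
`∫ f i dμ = μ(⋂ j, {f j = 1})`. -/
theorem stmt19 {Λ : Type*} [MeasurableSpace Λ]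
    (μ ν : Measure Λ) [IsProbabilityMeasure μ] [IsProbabilityMeasure ν]
    (I : Type*) [Countable I]
    (f : I → Λ → ℝ) (hmeas : ∀ i, Measurable (f i))
    (h0 : ∀ i l, 0 ≤ f i l) (h1 : ∀ i l, f i l ≤ 1)
    (hν : ∀ i, ∫ l, f i l ∂ν = 1)
    (hME : ∀ i, ∀ Ω : Set Λ, MeasurableSet Ω → ν Ω = 1 →
      ∫ l in Ω, f i l ∂μ = ∫ l, f i l ∂μ) :
    ∀ i, ∫ l, f i l ∂μ = (μ (⋂ j, {l : Λ | f j l = 1})).toReal :=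
  stmt19_general μ ν I f hmeas h1 hν hME
end
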